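/- arXiv:0706.3301 — 5 statements merged into one kernel-verified Lean document; each statement's English description precedes it below -/
import Mathlib

section
/- If A is a conformal Killing-Yano 2-form on a 4-dimensional Lorentzian manifold and n is the tangent vector of an affinely parameterized null geodesic (∇_n n = 0, g(n,n) = 0), then the scalar A²(n,n) = A_{μα}A^α_{ ν} n^μ n^ν is constant along the geodesic. -/
noncomputable section

/-!
Abstract component tensor calculus on a 4-dimensional pseudo-Riemannian manifold.
`R` plays the role of the ring of smooth functions, `pd i` of the coordinate partial
derivatives, `g`/`ginv` of the components of the metric and its inverse, and `Γ` of the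
Christoffel symbols of the Levi-Civita connection.
-/

variable {R : Type*} [CommRing R] [Algebra ℝ R]

/-- Covariant derivative ∇_i ω_k of a 1-form. -/
def cov1 (pd : Fin 4 → R → R) (Γ : Fin 4 → Fin 4 → Fin 4 → R)
    (ω : Fin 4 → R) (i k : Fin 4) : R :=
  pd i (ω k) - ∑ l, Γ l i k * ω l

/-- Covariant derivative ∇_i n^k of a vector field. -/
def covV (pd : Fin 4 → R → R) (Γ : Fin 4 → Fin 4 → Fin 4 → R)
    (n : Fin 4 → R) (i k : Fin 4) : R :=
  pd i (n k) + ∑ j, Γ k i j * n j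

/-- Covariant derivative ∇_i A_{jk} of a covariant 2-tensor. -/
def cov2 (pd : Fin 4 → R → R) (Γ : Fin 4 → Fin 4 → Fin 4 → R)
    (A : Fin 4 → Fin 4 → R) (i j k : Fin 4) : R :=
  pd i (A j k) - (∑ l, Γ l i j * A l k) - ∑ l, Γ l i k * A j l

/-- The conformal Killing-Yano equation ∇_(α A_β)μ = g_{αβ} a_μ - a_(α g_β)μ. -/
def CKYeq (pd : Fin 4 → R → R) (Γ : Fin 4 → Fin 4 → Fin 4 → R)
    (g : Fin 4 → Fin 4 → R) (A : Fin 4 → Fin 4 → R) (a : Fin 4 → R) : Prop :=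
  ∀ i j k, cov2 pd Γ A i j k + cov2 pd Γ A j i k =
    2 * (g i j * a k) - a i * g j k - a j * g i k

set_option linter.unusedSectionVars false

section Stmt3Aux
variable {R : Type*} [CommRing R] [Algebra ℝ R]

lemma s3_sum4_rev (f : Fin 4 → Fin 4 → Fin 4 → Fin 4 → R) :
    (∑ m, ∑ p, ∑ q, ∑ v, f m p q v) = ∑ m, ∑ p, ∑ q, ∑ v, f v q p m := by
  simp only [Fin.sum_univ_four]; ring

lemma s3_half_cancel (x : R) (h : x + x = 0) : x = 0 := by
  have h2 : (2 : R) * x = 0 := by linear_combination h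
  have h3 : (algebraMap ℝ R (1/2)) * ((2:R) * x) = 0 := by rw [h2]; ring
  calc x = (algebraMap ℝ R (1/2)) * ((2:R) * x) := by
        have h4 : ((2:R)) = algebraMap ℝ R 2 := by rw [map_ofNat]
        rw [h4, ← mul_assoc, ← map_mul]; norm_num
    _ = 0 := h3

lemma s3_antisym_contract (f : Fin 4 → Fin 4 → R) (n : Fin 4 → R)
    (hf : ∀ i j, f i j = -f j i) :
    (∑ i, ∑ j, f i j * n i * n j) = 0 := by
  apply s3_half_cancel
  have h1 : (∑ i, ∑ j, f i j * n i * n j) = ∑ i, ∑ j, f j i * n j * n i :=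
    Finset.sum_comm
  nth_rewrite 2 [h1]
  rw [← Finset.sum_add_distrib]
  refine Finset.sum_eq_zero fun i _ => ?_
  rw [← Finset.sum_add_distrib]
  refine Finset.sum_eq_zero fun j _ => ?_
  rw [hf i j]; ring

lemma s3_aux_geo (B N : Fin 4 → Fin 4 → R) (n : Fin 4 → R)
    (hg : ∀ k, (∑ i, n i * N i k) = 0) :
    (∑ i, ∑ m, ∑ v, n i * (B m v * (N i m * n v + n m * N i v))) = 0 := by
  have key : ∀ m v, (∑ i, n i * (B m v * (N i m * n v + n m * N i v))) = 0 := by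
    intro m v
    calc (∑ i, n i * (B m v * (N i m * n v + n m * N i v)))
        = B m v * n v * (∑ i, n i * N i m) + B m v * n m * (∑ i, n i * N i v) := by
          rw [Finset.mul_sum, Finset.mul_sum, ← Finset.sum_add_distrib]
          exact Finset.sum_congr rfl fun i _ => by ring
      _ = 0 := by rw [hg m, hg v]; ring
  rw [Finset.sum_comm]
  refine Finset.sum_eq_zero fun m _ => ?_
  rw [Finset.sum_comm]
  exact Finset.sum_eq_zero fun v _ => key m v

lemma s3_aux_main (pd : Fin 4 → R → R) (Γ : Fin 4 → Fin 4 → Fin 4 → R)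
    (hpd_add : ∀ i a b, pd i (a + b) = pd i a + pd i b)
    (hpd_mul : ∀ i a b, pd i (a * b) = pd i a * b + a * pd i b)
    (B : Fin 4 → Fin 4 → R) (N : Fin 4 → Fin 4 → R) (n : Fin 4 → R)
    (DB : Fin 4 → Fin 4 → Fin 4 → R)
    (hpdB : ∀ i m v, pd i (B m v) = DB i m v + (∑ l, Γ l i m * B l v) + ∑ l, Γ l i v * B m l)
    (hpdn : ∀ i m, pd i (n m) = N i m - ∑ j, Γ m i j * n j) :
    (∑ i, n i * pd i (∑ m, ∑ v, B m v * n m * n v)) =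
      (∑ i, ∑ m, ∑ v, n i * (DB i m v * n m * n v)) +
      ∑ i, ∑ m, ∑ v, n i * (B m v * (N i m * n v + n m * N i v)) := by
  simp only [Fin.sum_univ_four, hpd_add, hpd_mul, hpdB, hpdn]
  ring

set_option maxHeartbeats 2000000 in
lemma s3_step_sym (D : Fin 4 → Fin 4 → Fin 4 → R) (A ginv : Fin 4 → Fin 4 → R) (n : Fin 4 → R)
    (hA : ∀ i j, A i j = -A j i) (hD : ∀ i j k, D i j k = -D i k j)
    (hgs : ∀ i j, ginv i j = ginv j i) :
    (∑ i, ∑ m, ∑ v, n i * ((∑ p, ∑ q, (D i m p * ginv p q * A q v + A m p * ginv p q * D i q v)) * n m * n v))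
      = ∑ i, ∑ m, ∑ p, (D i m p + D m i p) * (n i * n m * (∑ q, ∑ v, ginv p q * A q v * n v)) := by
  have hAd : ∀ j, A j j = 0 := fun j => s3_half_cancel _ (by linear_combination hA j j)
  have hDd : ∀ i j, D i j j = 0 := fun i j => s3_half_cancel _ (by linear_combination hD i j j)
  simp only [Fin.sum_univ_four, hA 1 0, hA 2 0, hA 2 1, hA 3 0, hA 3 1, hA 3 2, hAd, hDd,
    show ∀ i, D i 1 0 = -D i 0 1 from fun i => hD i 1 0,
    show ∀ i, D i 2 0 = -D i 0 2 from fun i => hD i 2 0,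
    show ∀ i, D i 2 1 = -D i 1 2 from fun i => hD i 2 1,
    show ∀ i, D i 3 0 = -D i 0 3 from fun i => hD i 3 0,
    show ∀ i, D i 3 1 = -D i 1 3 from fun i => hD i 3 1,
    show ∀ i, D i 3 2 = -D i 2 3 from fun i => hD i 3 2,
    hgs 1 0, hgs 2 0, hgs 2 1, hgs 3 0, hgs 3 1, hgs 3 2]
  ring

lemma s3_step_split (g : Fin 4 → Fin 4 → R) (a n Y : Fin 4 → R) :
    (∑ i, ∑ m, ∑ p, (2 * (g i m * a p) - a i * g m p - a m * g i p) * (n i * n m * Y p))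
      = 2 * ((∑ i, ∑ j, g i j * n i * n j) * (∑ p, a p * Y p))
        - (∑ i, a i * n i) * (∑ m, ∑ p, g m p * n m * Y p)
        - (∑ i, a i * n i) * (∑ m, ∑ p, g m p * n m * Y p) := by
  simp only [Fin.sum_univ_four]; ring

lemma s3_delta_contract (f : Fin 4 → R) (m : Fin 4) :
    (∑ k, (if m = k then (1:R) else 0) * f k) = f m := by
  simp [ite_mul, Finset.sum_ite_eq]

lemma s3_step_contract (A g ginv : Fin 4 → Fin 4 → R) (n : Fin 4 → R)
    (hA : ∀ i j, A i j = -A j i)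
    (hginv : ∀ i j, (∑ k, g i k * ginv k j) = if i = j then (1:R) else 0) :
    (∑ m, ∑ p, g m p * n m * (∑ q, ∑ v, ginv p q * A q v * n v)) = 0 := by
  have c1 : ∀ m, (∑ p, g m p * (∑ q, ∑ v, ginv p q * A q v * n v)) = ∑ v, A m v * n v := by
    intro m
    calc (∑ p, g m p * (∑ q, ∑ v, ginv p q * A q v * n v))
        = ∑ q, (∑ p, g m p * ginv p q) * (∑ v, A q v * n v) := by
          simp only [Fin.sum_univ_four]; ring
      _ = ∑ q, (if m = q then (1:R) else 0) * (∑ v, A q v * n v) :=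
          Finset.sum_congr rfl fun q _ => by rw [hginv m q]
      _ = ∑ v, A m v * n v := s3_delta_contract (fun q => ∑ v, A q v * n v) m
  calc (∑ m, ∑ p, g m p * n m * (∑ q, ∑ v, ginv p q * A q v * n v))
      = ∑ m, n m * (∑ p, g m p * (∑ q, ∑ v, ginv p q * A q v * n v)) := by
        refine Finset.sum_congr rfl fun m _ => ?_
        rw [Finset.mul_sum]
        exact Finset.sum_congr rfl fun p _ => by ring
    _ = ∑ m, n m * (∑ v, A m v * n v) := Finset.sum_congr rfl fun m _ => by rw [c1 m]
    _ = ∑ m, ∑ v, A m v * n m * n v := by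
        refine Finset.sum_congr rfl fun m _ => ?_
        rw [Finset.mul_sum]
        exact Finset.sum_congr rfl fun v _ => by ring
    _ = 0 := s3_antisym_contract A n hA

end Stmt3Aux

/-- if A is a conformal Killing-Yano 2-form and n the tangent of an affinely
parameterized null geodesic, then A²(n,n) = A_μα A^α_ν n^μ n^ν is constant along the
geodesic. -/


theorem stmt3
    (pd : Fin 4 → R → R) (g ginv : Fin 4 → Fin 4 → R) (Γ : Fin 4 → Fin 4 → Fin 4 → R)
    (hpd_add : ∀ i a b, pd i (a + b) = pd i a + pd i b)
    (hpd_mul : ∀ i a b, pd i (a * b) = pd i a * b + a * pd i b)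
    (hpd_const : ∀ i (c : ℝ), pd i (algebraMap ℝ R c) = 0)
    (hpd_comm : ∀ i j a, pd i (pd j a) = pd j (pd i a))
    (hg_symm : ∀ i j, g i j = g j i)
    (hginv_symm : ∀ i j, ginv i j = ginv j i)
    (hginv : ∀ i j, (∑ k, g i k * ginv k j) = if i = j then (1 : R) else 0)
    (hΓsymm : ∀ k i j, Γ k i j = Γ k j i)
    (hmc : ∀ k i j, pd k (g i j) = ∑ l, (Γ l k i * g l j + Γ l k j * g i l))
    (A : Fin 4 → Fin 4 → R) (hA : ∀ i j, A i j = -A j i)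
    (a : Fin 4 → R) (ha : ∀ k, 3 * a k = ∑ l, ∑ m, ginv l m * cov2 pd Γ A m l k)
    (hCKY : CKYeq pd Γ g A a)
    (n : Fin 4 → R)
    (hnull : (∑ i, ∑ j, g i j * n i * n j) = 0)
    (hgeo : ∀ k, (∑ i, n i * covV pd Γ n i k) = 0) :
    ∑ i, n i * pd i (∑ m, ∑ p, ∑ q, ∑ v, A m p * ginv p q * A q v * n m * n v) = 0 := by
  have pd0 : ∀ i, pd i (0:R) = 0 := fun i => by simpa using hpd_const i 0
  have pd_neg : ∀ i x, pd i (-x) = -pd i x := by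
    intro i x
    have h := hpd_add i x (-x)
    rw [add_neg_cancel, pd0 i] at h
    linear_combination -h
  have pd_sum : ∀ i (f : Fin 4 → R), pd i (∑ k, f k) = ∑ k, pd i (f k) := by
    intro i f; simp only [Fin.sum_univ_four, hpd_add]
  have pd_delta : ∀ i (m s : Fin 4), pd i (if m = s then (1:R) else 0) = 0 := by
    intro i m s; split
    · simpa using hpd_const i 1
    · simpa using hpd_const i 0
  have hd2 : ∀ m k, (∑ r, ginv m r * g r k) = if m = k then (1:R) else 0 := by
    intro m k
    calc (∑ r, ginv m r * g r k) = ∑ r, g k r * ginv r m :=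
          Finset.sum_congr rfl fun r _ => by rw [hg_symm k r, hginv_symm m r]; ring
      _ = if k = m then 1 else 0 := hginv k m
      _ = if m = k then 1 else 0 := by simp [eq_comm]
  have key : ∀ i r s, (∑ k, g r k * pd i (ginv k s)) = -∑ k, pd i (g r k) * ginv k s := by
    intro i r s
    have h := congrArg (pd i) (hginv r s)
    rw [pd_sum, pd_delta] at h
    rw [show (∑ k, pd i (g r k * ginv k s)) =
        (∑ k, pd i (g r k) * ginv k s) + ∑ k, g r k * pd i (ginv k s) from by
      rw [← Finset.sum_add_distrib]
      exact Finset.sum_congr rfl fun k _ => hpd_mul i _ _] at h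
    linear_combination h
  have pdginv : ∀ i m s,
      pd i (ginv m s) = -(∑ l, Γ m i l * ginv l s) - ∑ l, Γ s i l * ginv m l := by
    intro i m s
    calc pd i (ginv m s)
        = ∑ k, (if m = k then (1:R) else 0) * pd i (ginv k s) :=
          (s3_delta_contract (fun k => pd i (ginv k s)) m).symm
      _ = ∑ k, (∑ r, ginv m r * g r k) * pd i (ginv k s) :=
          Finset.sum_congr rfl fun k _ => by rw [hd2 m k]
      _ = ∑ r, ginv m r * ∑ k, g r k * pd i (ginv k s) := by
          simp only [Fin.sum_univ_four]; ring
      _ = ∑ r, ginv m r * (-∑ k, pd i (g r k) * ginv k s) :=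
          Finset.sum_congr rfl fun r _ => by rw [key i r s]
      _ = ∑ r, ginv m r * (-∑ k, (∑ l, (Γ l i r * g l k + Γ l i k * g r l)) * ginv k s) :=
          Finset.sum_congr rfl fun r _ => by
            congr 2; exact Finset.sum_congr rfl fun k _ => by rw [hmc i r k]
      _ = -((∑ r, ∑ l, ginv m r * Γ l i r * (∑ k, g l k * ginv k s)) +
            ∑ k, ∑ l, Γ l i k * ginv k s * (∑ r, ginv m r * g r l)) := by
          simp only [Fin.sum_univ_four]; ring
      _ = -((∑ r, ∑ l, ginv m r * Γ l i r * (if l = s then (1:R) else 0)) +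
            ∑ k, ∑ l, Γ l i k * ginv k s * (if m = l then (1:R) else 0)) := by
          congr 1
          congr 1
          · exact Finset.sum_congr rfl fun r _ => Finset.sum_congr rfl fun l _ => by
              rw [hginv l s]
          · exact Finset.sum_congr rfl fun k _ => Finset.sum_congr rfl fun l _ => by
              rw [hd2 m l]
      _ = -((∑ r, ginv m r * Γ s i r) + ∑ k, Γ m i k * ginv k s) := by
          congr 1
          congr 1
          · exact Finset.sum_congr rfl fun r _ => by
              simp [mul_ite, Finset.sum_ite_eq']
          · exact Finset.sum_congr rfl fun k _ => by
              simp [mul_ite, Finset.sum_ite_eq]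
      _ = -(∑ l, Γ m i l * ginv l s) - ∑ l, Γ s i l * ginv m l := by
          simp only [Fin.sum_univ_four]; ring
  have hDskew : ∀ i j k, cov2 pd Γ A i j k = -cov2 pd Γ A i k j := by
    intro i j k
    have h1 : pd i (A j k) = -pd i (A k j) := by rw [hA j k, pd_neg]
    simp only [cov2, Fin.sum_univ_four]
    linear_combination h1 - Γ 0 i j * hA 0 k - Γ 1 i j * hA 1 k - Γ 2 i j * hA 2 k
      - Γ 3 i j * hA 3 k - Γ 0 i k * hA j 0 - Γ 1 i k * hA j 1 - Γ 2 i k * hA j 2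
      - Γ 3 i k * hA j 3
  have hpdB : ∀ i m v, pd i (∑ p, ∑ q, A m p * ginv p q * A q v) =
      (∑ p, ∑ q, (cov2 pd Γ A i m p * ginv p q * A q v + A m p * ginv p q * cov2 pd Γ A i q v))
      + (∑ l, Γ l i m * (∑ p, ∑ q, A l p * ginv p q * A q v))
      + ∑ l, Γ l i v * (∑ p, ∑ q, A m p * ginv p q * A q l) := by
    intro i m v
    simp only [cov2, Fin.sum_univ_four, hpd_add, hpd_mul, pdginv]
    ring
  have hpdn : ∀ i m, pd i (n m) = covV pd Γ n i m - ∑ j, Γ m i j * n j := by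
    intro i m; simp only [covV]; ring
  have hS0 : (∑ m, ∑ p, ∑ q, ∑ v, A m p * ginv p q * A q v * n m * n v)
      = ∑ m, ∑ v, (∑ p, ∑ q, A m p * ginv p q * A q v) * n m * n v := by
    simp only [Fin.sum_univ_four]; ring
  have hC : ∀ i j k, cov2 pd Γ A i j k + cov2 pd Γ A j i k =
      2 * (g i j * a k) - a i * g j k - a j * g i k := hCKY
  calc (∑ i, n i * pd i (∑ m, ∑ p, ∑ q, ∑ v, A m p * ginv p q * A q v * n m * n v))
      = ∑ i, n i * pd i (∑ m, ∑ v, (∑ p, ∑ q, A m p * ginv p q * A q v) * n m * n v) :=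
        Finset.sum_congr rfl fun i _ => by rw [hS0]
    _ = (∑ i, ∑ m, ∑ v, n i * ((∑ p, ∑ q, (cov2 pd Γ A i m p * ginv p q * A q v
            + A m p * ginv p q * cov2 pd Γ A i q v)) * n m * n v))
        + ∑ i, ∑ m, ∑ v, n i * ((∑ p, ∑ q, A m p * ginv p q * A q v)
            * (covV pd Γ n i m * n v + n m * covV pd Γ n i v)) :=
        s3_aux_main pd Γ hpd_add hpd_mul
          (fun m v => ∑ p, ∑ q, A m p * ginv p q * A q v) (covV pd Γ n) n
          (fun i m v => ∑ p, ∑ q, (cov2 pd Γ A i m p * ginv p q * A q v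
            + A m p * ginv p q * cov2 pd Γ A i q v)) hpdB hpdn
    _ = (∑ i, ∑ m, ∑ v, n i * ((∑ p, ∑ q, (cov2 pd Γ A i m p * ginv p q * A q v
            + A m p * ginv p q * cov2 pd Γ A i q v)) * n m * n v)) + 0 := by
        congr 1
        exact s3_aux_geo (fun m v => ∑ p, ∑ q, A m p * ginv p q * A q v) (covV pd Γ n) n hgeo
    _ = ∑ i, ∑ m, ∑ p, (cov2 pd Γ A i m p + cov2 pd Γ A m i p)
          * (n i * n m * (∑ q, ∑ v, ginv p q * A q v * n v)) := by
        rw [add_zero]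
        exact s3_step_sym (cov2 pd Γ A) A ginv n hA hDskew hginv_symm
    _ = ∑ i, ∑ m, ∑ p, (2 * (g i m * a p) - a i * g m p - a m * g i p)
          * (n i * n m * (∑ q, ∑ v, ginv p q * A q v * n v)) := by
        refine Finset.sum_congr rfl fun i _ => Finset.sum_congr rfl fun m _ =>
          Finset.sum_congr rfl fun p _ => ?_
        rw [hC i m p]
    _ = 2 * ((∑ i, ∑ j, g i j * n i * n j)
            * (∑ p, a p * (∑ q, ∑ v, ginv p q * A q v * n v)))
        - (∑ i, a i * n i) * (∑ m, ∑ p, g m p * n m * (∑ q, ∑ v, ginv p q * A q v * n v))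
        - (∑ i, a i * n i) * (∑ m, ∑ p, g m p * n m * (∑ q, ∑ v, ginv p q * A q v * n v)) :=
        s3_step_split g a n (fun p => ∑ q, ∑ v, ginv p q * A q v * n v)
    _ = 0 := by rw [hnull, s3_step_contract A g ginv n hA hginv]; ring
end
end

section
/- If A is a conformal Killing-Yano 2-form, then the traceless part P of A² is a conformal Killing tensor, i.e. P satisfies ∇_{(α} P_{βμ)} = g_{(αβ} b_{μ)} for some 1-form b (namely 3b = ∇·P). -/
noncomputable section

/-!
Abstract component tensor calculus on a 4-dimensional pseudo-Riemannian manifold.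
`R` plays the role of the ring of smooth functions, `pd i` of the coordinate partial
derivatives, `g`/`ginv` of the components of the metric and its inverse, and `Γ` of the
Christoffel symbols of the Levi-Civita connection.
-/

variable {R : Type*} [CommRing R] [Algebra ℝ R]

set_option maxHeartbeats 2000000 in
/-- if A is a conformal Killing-Yano 2-form, the traceless part P of A² is a
conformal Killing tensor: ∇_(α P_βμ) = g_(αβ b_μ) with 3b = ∇·P. -/
theorem stmt4
    (pd : Fin 4 → R → R) (g ginv : Fin 4 → Fin 4 → R) (Γ : Fin 4 → Fin 4 → Fin 4 → R)
    (hpd_add : ∀ i a b, pd i (a + b) = pd i a + pd i b)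
    (hpd_mul : ∀ i a b, pd i (a * b) = pd i a * b + a * pd i b)
    (hpd_const : ∀ i (c : ℝ), pd i (algebraMap ℝ R c) = 0)
    (hpd_comm : ∀ i j a, pd i (pd j a) = pd j (pd i a))
    (hg_symm : ∀ i j, g i j = g j i)
    (hginv_symm : ∀ i j, ginv i j = ginv j i)
    (hginv : ∀ i j, (∑ k, g i k * ginv k j) = if i = j then (1 : R) else 0)
    (hΓsymm : ∀ k i j, Γ k i j = Γ k j i)
    (hmc : ∀ k i j, pd k (g i j) = ∑ l, (Γ l k i * g l j + Γ l k j * g i l))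
    (A : Fin 4 → Fin 4 → R) (hA : ∀ i j, A i j = -A j i)
    (a : Fin 4 → R) (ha : ∀ k, 3 * a k = ∑ l, ∑ m, ginv l m * cov2 pd Γ A m l k)
    (hCKY : CKYeq pd Γ g A a)
    (Asq : Fin 4 → Fin 4 → R)
    (hAsq : ∀ m v, Asq m v = ∑ p, ∑ q, A m p * ginv p q * A q v)
    (P : Fin 4 → Fin 4 → R)
    (hP : ∀ m v, P m v =
      Asq m v - algebraMap ℝ R (1/4) * (∑ i, ∑ j, ginv i j * Asq i j) * g m v) :
    ∃ b : Fin 4 → R,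
      (∀ k, 3 * b k = ∑ l, ∑ m, ginv l m * cov2 pd Γ P m l k) ∧
      (∀ i j k, cov2 pd Γ P i j k + cov2 pd Γ P j k i + cov2 pd Γ P k i j =
        g i j * b k + g j k * b i + g k i * b j) := by
  classical
  -- basic facts about the derivations `pd i`
  have hpd0 : ∀ i, pd i (0 : R) = 0 := by
    intro i; have := hpd_const i 0; simpa using this
  have hpd1 : ∀ i, pd i (1 : R) = 0 := by
    intro i; have := hpd_const i 1; simpa using this
  have hpd_neg : ∀ i x, pd i (-x) = -pd i x := by
    intro i x
    have h := hpd_add i x (-x)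
    rw [add_neg_cancel, hpd0] at h
    linear_combination -h
  have hpd_sub : ∀ i x y, pd i (x - y) = pd i x - pd i y := by
    intro i x y
    rw [sub_eq_add_neg, hpd_add, hpd_neg]; ring
  have hg0 : ∀ (k : Fin 4) (i j : Fin 4), pd k (if i = j then (1:R) else 0) = 0 := by
    intro k i j
    rcases eq_or_ne i j with h | h
    · simp [h, hpd1 k]
    · simp [h, hpd0 k]
  -- the inverse metric is also symmetric-inverse on the other side
  have hginv' : ∀ i j, (∑ k, ginv i k * g k j) = if i = j then (1:R) else 0 := by
    intro i j
    have e : (∑ k, ginv i k * g k j) = ∑ k, g j k * ginv k i :=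
      Finset.sum_congr rfl fun k _ => by rw [hg_symm k j, hginv_symm i k]; ring
    rw [e, hginv j i]
    exact if_congr eq_comm rfl rfl
  have helper3 : ∀ (f : Fin 4 → R) (y : Fin 4), (∑ l, (if y = l then (1:R) else 0) * f l) = f y := by
    intro f y; simp
  have helper2 : ∀ (f : Fin 4 → R) (y : Fin 4), (∑ l, f l * (if l = y then (1:R) else 0)) = f y := by
    intro f y; simp
  have helper1' : ∀ (f : Fin 4 → R) (y : Fin 4), (∑ l, f l * (if y = l then (1:R) else 0)) = f y := by
    intro f y; simp
  -- differentiating g · ginv = δ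
  have key : ∀ k i j, (∑ m, (pd k (g i m) * ginv m j + g i m * pd k (ginv m j))) = 0 := by
    intro k i j
    have h1 : pd k (∑ m, g i m * ginv m j) = 0 := by rw [hginv i j]; exact hg0 k i j
    have h2 : pd k (∑ m, g i m * ginv m j)
        = ∑ m, (pd k (g i m) * ginv m j + g i m * pd k (ginv m j)) := by
      simp only [Fin.sum_univ_four, hpd_add, hpd_mul]
    exact h2.symm.trans h1
  have hcontrA : ∀ (f : Fin 4 → R) (y : Fin 4), (∑ i, ∑ m, ginv y i * (g i m * f m)) = f y := by
    intro f y
    calc (∑ i, ∑ m, ginv y i * (g i m * f m))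
        = ∑ m, (∑ i, ginv y i * g i m) * f m := by simp only [Fin.sum_univ_four]; ring
      _ = ∑ m, (if y = m then (1:R) else 0) * f m :=
          Finset.sum_congr rfl fun m _ => by rw [hginv' y m]
      _ = f y := helper3 f y
  have S1a : ∀ k x y, (∑ i, ∑ m, ginv x i * (pd k (g i m) * ginv m y))
      = (∑ l, Γ x k l * ginv l y) + ∑ l, Γ y k l * ginv x l := by
    intro k x y
    calc (∑ i, ∑ m, ginv x i * (pd k (g i m) * ginv m y))
        = ∑ i, ∑ m, ginv x i * ((∑ l, (Γ l k i * g l m + Γ l k m * g i l)) * ginv m y) :=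
          Finset.sum_congr rfl fun i _ => Finset.sum_congr rfl fun m _ => by rw [hmc k i m]
      _ = (∑ i, ∑ l, (ginv x i * Γ l k i) * (∑ m, g l m * ginv m y))
          + ∑ m, ∑ l, (Γ l k m * ginv m y) * (∑ i, ginv x i * g i l) := by
          simp only [Fin.sum_univ_four]; ring
      _ = (∑ i, ∑ l, (ginv x i * Γ l k i) * (if l = y then (1:R) else 0))
          + ∑ m, ∑ l, (Γ l k m * ginv m y) * (if x = l then (1:R) else 0) := by
          refine congrArg₂ (· + ·) ?_ ?_
          · exact Finset.sum_congr rfl fun i _ => Finset.sum_congr rfl fun l _ => by rw [hginv l y]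
          · exact Finset.sum_congr rfl fun m _ => Finset.sum_congr rfl fun l _ => by rw [hginv' x l]
      _ = (∑ i, ginv x i * Γ y k i) + ∑ m, Γ x k m * ginv m y := by
          refine congrArg₂ (· + ·) ?_ ?_
          · exact Finset.sum_congr rfl fun i _ => helper2 _ y
          · exact Finset.sum_congr rfl fun m _ => helper1' _ x
      _ = (∑ l, Γ x k l * ginv l y) + ∑ l, Γ y k l * ginv x l := by
          simp only [Fin.sum_univ_four]; ring
  -- ∇ ginv = 0
  have hpdginv : ∀ k x y, pd k (ginv x y) = -∑ l, (Γ x k l * ginv l y + Γ y k l * ginv x l) := by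
    intro k x y
    have H2 : (∑ i, ginv x i * (∑ m, (pd k (g i m) * ginv m y + g i m * pd k (ginv m y)))) = 0 := by
      calc (∑ i, ginv x i * (∑ m, (pd k (g i m) * ginv m y + g i m * pd k (ginv m y))))
          = ∑ i : Fin 4, ginv x i * (0:R) := Finset.sum_congr rfl fun i _ => by rw [key k i y]
        _ = 0 := by simp
    have Hsplit : (∑ i, ginv x i * (∑ m, (pd k (g i m) * ginv m y + g i m * pd k (ginv m y))))
        = (∑ i, ∑ m, ginv x i * (pd k (g i m) * ginv m y))
          + ∑ i, ∑ m, ginv x i * (g i m * pd k (ginv m y)) := by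
      simp only [Fin.sum_univ_four]; ring
    have S2 : (∑ i, ∑ m, ginv x i * (g i m * pd k (ginv m y))) = pd k (ginv x y) :=
      hcontrA (fun m => pd k (ginv m y)) x
    have hS1 := S1a k x y
    have hfin : (∑ l, (Γ x k l * ginv l y + Γ y k l * ginv x l))
        = (∑ l, Γ x k l * ginv l y) + ∑ l, Γ y k l * ginv x l := by
      simp only [Fin.sum_univ_four]; ring
    linear_combination H2 - Hsplit - hS1 - S2 + hfin
  -- contraction helpers
  have hcontrB : ∀ (f : Fin 4 → R) (y : Fin 4), (∑ p, ∑ q, ginv p q * (g y p * f q)) = f y := by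
    intro f y
    calc (∑ p, ∑ q, ginv p q * (g y p * f q))
        = ∑ q, (∑ p, g y p * ginv p q) * f q := by simp only [Fin.sum_univ_four]; ring
      _ = ∑ q, (if y = q then (1:R) else 0) * f q :=
          Finset.sum_congr rfl fun q _ => by rw [hginv y q]
      _ = f y := helper3 f y
  have hcontrC : ∀ (f : Fin 4 → R) (y : Fin 4), (∑ l, ∑ m, ginv l m * (g y m * f l)) = f y := by
    intro f y
    calc (∑ l, ∑ m, ginv l m * (g y m * f l))
        = ∑ l, ∑ m, ginv m l * (g y m * f l) :=
          Finset.sum_congr rfl fun l _ => Finset.sum_congr rfl fun m _ => by rw [hginv_symm l m]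
      _ = ∑ l, (∑ m, g y m * ginv m l) * f l := by simp only [Fin.sum_univ_four]; ring
      _ = ∑ l, (if y = l then (1:R) else 0) * f l :=
          Finset.sum_congr rfl fun l _ => by rw [hginv y l]
      _ = f y := helper3 f y
  -- the CKY equation, unfolded
  have hCKY' : ∀ i j k, cov2 pd Γ A i j k + cov2 pd Γ A j i k =
      2 * (g i j * a k) - a i * g j k - a j * g i k := hCKY
  -- ∇A is antisymmetric in its last two indices
  have hNanti : ∀ i q k, cov2 pd Γ A i q k = -cov2 pd Γ A i k q := by
    intro i q k
    have e0 : pd i (A q k) = -pd i (A k q) := by rw [hA q k, hpd_neg]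
    have e1 : (∑ l, Γ l i q * A l k) = -∑ l, Γ l i q * A k l := by
      simp only [Fin.sum_univ_four]
      linear_combination Γ 0 i q * hA 0 k + Γ 1 i q * hA 1 k + Γ 2 i q * hA 2 k + Γ 3 i q * hA 3 k
    have e2 : (∑ l, Γ l i k * A q l) = -∑ l, Γ l i k * A l q := by
      simp only [Fin.sum_univ_four]
      linear_combination Γ 0 i k * hA q 0 + Γ 1 i k * hA q 1 + Γ 2 i k * hA q 2 + Γ 3 i k * hA q 3
    simp only [cov2]
    linear_combination e0 - e1 - e2
  -- Leibniz rule for the covariant derivative of A²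
  have hcovAsq : ∀ i j k, cov2 pd Γ Asq i j k
      = ∑ p, ∑ q, ginv p q * (cov2 pd Γ A i j p * A q k + A j p * cov2 pd Γ A i q k) := by
    intro i j k
    simp only [cov2, hAsq, Fin.sum_univ_four, hpd_add, hpd_mul, hpdginv]
    ring
  have hswap : ∀ x y z, (∑ p, ∑ q, ginv p q * (A y p * cov2 pd Γ A x q z))
      = ∑ p, ∑ q, ginv p q * (cov2 pd Γ A x z p * A q y) := by
    intro x y z
    calc (∑ p, ∑ q, ginv p q * (A y p * cov2 pd Γ A x q z))
        = ∑ p, ∑ q, ginv q p * (A y q * cov2 pd Γ A x p z) := by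
          simp only [Fin.sum_univ_four]; ring
      _ = ∑ p, ∑ q, ginv p q * (cov2 pd Γ A x z p * A q y) :=
          Finset.sum_congr rfl fun p _ => Finset.sum_congr rfl fun q _ => by
            rw [hginv_symm q p, hA y q, hNanti x p z]; ring
  have hpair : ∀ x y z, (∑ p, ∑ q, ginv p q * (cov2 pd Γ A x y p * A q z))
      + (∑ p, ∑ q, ginv p q * (cov2 pd Γ A y x p * A q z))
      = 2 * (g x y * (∑ p, ∑ q, ginv p q * (a p * A q z))) - a x * A y z - a y * A x z := by
    intro x y z
    have e1 : (∑ p, ∑ q, ginv p q * (g y p * A q z)) = A y z := hcontrB (fun q => A q z) y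
    have e2 : (∑ p, ∑ q, ginv p q * (g x p * A q z)) = A x z := hcontrB (fun q => A q z) x
    simp only [Fin.sum_univ_four] at e1 e2 ⊢
    linear_combination
      (ginv 0 0 * A 0 z + ginv 0 1 * A 1 z + ginv 0 2 * A 2 z + ginv 0 3 * A 3 z) * hCKY' x y 0
      + (ginv 1 0 * A 0 z + ginv 1 1 * A 1 z + ginv 1 2 * A 2 z + ginv 1 3 * A 3 z) * hCKY' x y 1
      + (ginv 2 0 * A 0 z + ginv 2 1 * A 1 z + ginv 2 2 * A 2 z + ginv 2 3 * A 3 z) * hCKY' x y 2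
      + (ginv 3 0 * A 0 z + ginv 3 1 * A 1 z + ginv 3 2 * A 2 z + ginv 3 3 * A 3 z) * hCKY' x y 3
      - a x * e1 - a y * e2
  -- the cyclic identity for A²
  have hcyc : ∀ i j k, cov2 pd Γ Asq i j k + cov2 pd Γ Asq j k i + cov2 pd Γ Asq k i j =
      2 * (g i j * (∑ p, ∑ q, ginv p q * (a p * A q k))
        + g j k * (∑ p, ∑ q, ginv p q * (a p * A q i))
        + g k i * (∑ p, ∑ q, ginv p q * (a p * A q j))) := by
    intro i j k
    rw [hcovAsq i j k, hcovAsq j k i, hcovAsq k i j]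
    rw [show (∑ p, ∑ q, ginv p q * (cov2 pd Γ A i j p * A q k + A j p * cov2 pd Γ A i q k))
        = (∑ p, ∑ q, ginv p q * (cov2 pd Γ A i j p * A q k))
          + (∑ p, ∑ q, ginv p q * (A j p * cov2 pd Γ A i q k)) from by
      simp only [Fin.sum_univ_four]; ring]
    rw [show (∑ p, ∑ q, ginv p q * (cov2 pd Γ A j k p * A q i + A k p * cov2 pd Γ A j q i))
        = (∑ p, ∑ q, ginv p q * (cov2 pd Γ A j k p * A q i))
          + (∑ p, ∑ q, ginv p q * (A k p * cov2 pd Γ A j q i)) from by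
      simp only [Fin.sum_univ_four]; ring]
    rw [show (∑ p, ∑ q, ginv p q * (cov2 pd Γ A k i p * A q j + A i p * cov2 pd Γ A k q j))
        = (∑ p, ∑ q, ginv p q * (cov2 pd Γ A k i p * A q j))
          + (∑ p, ∑ q, ginv p q * (A i p * cov2 pd Γ A k q j)) from by
      simp only [Fin.sum_univ_four]; ring]
    rw [hswap i j k, hswap j k i, hswap k i j]
    linear_combination hpair i j k + hpair i k j + hpair j k i
      - a i * hA j k - a j * hA i k - a k * hA i j
      - 2 * (∑ p, ∑ q, ginv p q * (a p * A q j)) * hg_symm k i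
  -- symmetry of A², P, and of the covariant derivative of P
  have hAsqsymm : ∀ m v, Asq m v = Asq v m := by
    intro m v
    rw [hAsq, hAsq]
    rw [show (∑ p, ∑ q, A v p * ginv p q * A q m) = ∑ p, ∑ q, A v q * ginv q p * A p m from by
      simp only [Fin.sum_univ_four]; ring]
    exact Finset.sum_congr rfl fun p _ => Finset.sum_congr rfl fun q _ => by
      rw [hA v q, hA p m, hginv_symm q p]; ring
  have hPsymm : ∀ m v, P m v = P v m := by
    intro m v
    rw [hP, hP, hAsqsymm m v, hg_symm m v]
  have hcov2Psymm : ∀ x u v, cov2 pd Γ P x u v = cov2 pd Γ P x v u := by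
    intro x u v
    simp only [cov2]
    rw [hPsymm u v]
    rw [show (∑ l, Γ l x u * P l v) = ∑ l, Γ l x u * P v l from
      Finset.sum_congr rfl fun l _ => by rw [hPsymm l v]]
    rw [show (∑ l, Γ l x v * P u l) = ∑ l, Γ l x v * P l u from
      Finset.sum_congr rfl fun l _ => by rw [hPsymm u l]]
    ring
  -- covariant derivative of P in terms of that of A²
  have hcovP : ∀ i j k, cov2 pd Γ P i j k = cov2 pd Γ Asq i j k
      - pd i (algebraMap ℝ R (1/4) * ∑ i', ∑ j', ginv i' j' * Asq i' j') * g j k := by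
    intro i j k
    simp only [cov2, hP, Fin.sum_univ_four, hpd_sub, hpd_add, hpd_mul, hpd_const, hpdginv, hmc,
      zero_mul]
    ring
  have h4sum : (∑ l, ∑ m, ginv l m * g l m) = (4:R) := by
    calc (∑ l, ∑ m, ginv l m * g l m) = ∑ l : Fin 4, (1:R) := by
          refine Finset.sum_congr rfl fun l _ => ?_
          rw [show (∑ m, ginv l m * g l m) = ∑ m, ginv l m * g m l from
            Finset.sum_congr rfl fun m _ => by rw [hg_symm l m]]
          rw [hginv' l l]; simp
      _ = 4 := by simp
  have h4sum' : (∑ l, ∑ m, ginv l m * g m l) = (4:R) := by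
    calc (∑ l, ∑ m, ginv l m * g m l) = ∑ l : Fin 4, (1:R) := by
          refine Finset.sum_congr rfl fun l _ => ?_
          rw [hginv' l l]; simp
      _ = 4 := by simp
  have hmap4 : (algebraMap ℝ R) (4:ℝ) = (4:R) := map_ofNat _ 4
  have hq : algebraMap ℝ R (1/4) * (4:R) = 1 := by
    rw [← hmap4, ← map_mul, show (1/4 * 4 : ℝ) = 1 by norm_num, map_one]
  have hmap2 : (algebraMap ℝ R) (2:ℝ) = (2:R) := map_ofNat _ 2
  have hhalf : algebraMap ℝ R (1/2) * (2:R) = 1 := by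
    rw [← hmap2, ← map_mul, show (1/2 * 2 : ℝ) = 1 by norm_num, map_one]
  -- P is trace free
  have htrP : (∑ l, ∑ m, ginv l m * P l m) = 0 := by
    calc (∑ l, ∑ m, ginv l m * P l m)
        = ∑ l, ∑ m, (ginv l m * Asq l m
            - algebraMap ℝ R (1/4) * (∑ i, ∑ j, ginv i j * Asq i j) * (ginv l m * g l m)) :=
          Finset.sum_congr rfl fun l _ => Finset.sum_congr rfl fun m _ => by rw [hP]; ring
      _ = (∑ l, ∑ m, ginv l m * Asq l m)
          - algebraMap ℝ R (1/4) * (∑ i, ∑ j, ginv i j * Asq i j)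
            * (∑ l, ∑ m, ginv l m * g l m) := by
          simp only [Fin.sum_univ_four]; ring
      _ = 0 := by
          rw [h4sum]
          linear_combination (-(∑ i, ∑ j, ginv i j * Asq i j)) * hq
  -- contracted covariant derivative is the derivative of the trace
  have htrdiv : ∀ k, (∑ l, ∑ m, ginv l m * cov2 pd Γ P k m l)
      = pd k (∑ l, ∑ m, ginv l m * P l m) := by
    intro k
    simp only [cov2, Fin.sum_univ_four, hpd_add, hpd_mul, hpdginv]
    simp only [show P 1 0 = P 0 1 from hPsymm 1 0, show P 2 0 = P 0 2 from hPsymm 2 0,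
      show P 3 0 = P 0 3 from hPsymm 3 0, show P 2 1 = P 1 2 from hPsymm 2 1,
      show P 3 1 = P 1 3 from hPsymm 3 1, show P 3 2 = P 2 3 from hPsymm 3 2,
      show ginv 1 0 = ginv 0 1 from hginv_symm 1 0, show ginv 2 0 = ginv 0 2 from hginv_symm 2 0,
      show ginv 3 0 = ginv 0 3 from hginv_symm 3 0, show ginv 2 1 = ginv 1 2 from hginv_symm 2 1,
      show ginv 3 1 = ginv 1 3 from hginv_symm 3 1, show ginv 3 2 = ginv 2 3 from hginv_symm 3 2]
    ring
  -- the conformal Killing 1-form b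
  set bb : Fin 4 → R := fun t => 2 * (∑ p, ∑ q, ginv p q * (a p * A q t))
      - pd t (algebraMap ℝ R (1/4) * ∑ i', ∑ j', ginv i' j' * Asq i' j') with hbbdef
  have hbb : ∀ t, bb t = 2 * (∑ p, ∑ q, ginv p q * (a p * A q t))
      - pd t (algebraMap ℝ R (1/4) * ∑ i', ∑ j', ginv i' j' * Asq i' j') := fun t => by
    rw [hbbdef]
  have keyc : ∀ i j k, cov2 pd Γ P i j k + cov2 pd Γ P j k i + cov2 pd Γ P k i j =
      g i j * bb k + g j k * bb i + g k i * bb j := by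
    intro i j k
    rw [hcovP i j k, hcovP j k i, hcovP k i j, hbb i, hbb j, hbb k]
    linear_combination hcyc i j k
  refine ⟨bb, ?_, keyc⟩
  intro k
  have hTT : (∑ l, ∑ m, ginv l m * cov2 pd Γ P l k m)
      = ∑ l, ∑ m, ginv l m * cov2 pd Γ P m l k := by
    calc (∑ l, ∑ m, ginv l m * cov2 pd Γ P l k m)
        = ∑ l, ∑ m, ginv m l * cov2 pd Γ P m k l := Finset.sum_comm
      _ = ∑ l, ∑ m, ginv l m * cov2 pd Γ P m l k :=
          Finset.sum_congr rfl fun l _ => Finset.sum_congr rfl fun m _ => by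
            rw [hginv_symm m l, hcov2Psymm m k l]
  have hW : (∑ l, ∑ m, ginv l m * cov2 pd Γ P k m l) = 0 := by
    rw [htrdiv k, htrP]; exact hpd0 k
  have eS2 : (∑ l, ∑ m, ginv l m * (g l k * bb m)) = bb k := by
    calc (∑ l, ∑ m, ginv l m * (g l k * bb m))
        = ∑ l, ∑ m, ginv l m * (g k l * bb m) :=
          Finset.sum_congr rfl fun l _ => Finset.sum_congr rfl fun m _ => by rw [hg_symm l k]
      _ = bb k := hcontrB bb k
  have eS3 : (∑ l, ∑ m, ginv l m * (g k m * bb l)) = bb k := hcontrC bb k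
  have eS1 : (∑ l, ∑ m, ginv l m * (g m l * bb k)) = 4 * bb k := by
    calc (∑ l, ∑ m, ginv l m * (g m l * bb k))
        = (∑ l, ∑ m, ginv l m * g m l) * bb k := by simp only [Fin.sum_univ_four]; ring
      _ = 4 * bb k := by rw [h4sum']
  have h6 : (∑ l, ∑ m, ginv l m * cov2 pd Γ P m l k)
      + (∑ l, ∑ m, ginv l m * cov2 pd Γ P l k m)
      + (∑ l, ∑ m, ginv l m * cov2 pd Γ P k m l)
      = 4 * bb k + bb k + bb k := by
    calc (∑ l, ∑ m, ginv l m * cov2 pd Γ P m l k)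
        + (∑ l, ∑ m, ginv l m * cov2 pd Γ P l k m)
        + (∑ l, ∑ m, ginv l m * cov2 pd Γ P k m l)
        = ∑ l, ∑ m, (ginv l m * cov2 pd Γ P m l k + ginv l m * cov2 pd Γ P l k m
            + ginv l m * cov2 pd Γ P k m l) := by
          simp only [Fin.sum_univ_four]; ring
      _ = ∑ l, ∑ m, (ginv l m * (g m l * bb k) + ginv l m * (g l k * bb m)
            + ginv l m * (g k m * bb l)) :=
          Finset.sum_congr rfl fun l _ => Finset.sum_congr rfl fun m _ => by
            linear_combination ginv l m * keyc m l k
      _ = (∑ l, ∑ m, ginv l m * (g m l * bb k)) + (∑ l, ∑ m, ginv l m * (g l k * bb m))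
          + (∑ l, ∑ m, ginv l m * (g k m * bb l)) := by
          simp only [Fin.sum_univ_four]; ring
      _ = 4 * bb k + bb k + bb k := by rw [eS1, eS2, eS3]
  rw [hTT, hW] at h6
  linear_combination (-(algebraMap ℝ R (1/2))) * h6
    + ((∑ l, ∑ m, ginv l m * cov2 pd Γ P m l k) - 3 * bb k) * hhalf
end
end

section
/- Let Z be a Killing vector and K a Killing tensor on a pseudo-Riemannian manifold such that K is invariant under Z (L_Z K = 0) and the Papapetrou field commutes with K ([∇Z, K] = 0). Then Y = K(Z) is a Killing vector, and [Z, Y] = 0. -/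
noncomputable section

/-!
Abstract component tensor calculus on a 4-dimensional pseudo-Riemannian manifold.
`R` plays the role of the ring of smooth functions, `pd i` of the coordinate partial
derivatives, `g`/`ginv` of the components of the metric and its inverse, and `Γ` of the
Christoffel symbols of the Levi-Civita connection.
-/

variable {R : Type*} [CommRing R] [Algebra ℝ R]

lemma pd_zero' (pd : Fin 4 → R → R)
    (hpd_const : ∀ i (c : ℝ), pd i (algebraMap ℝ R c) = 0) (i : Fin 4) :
    pd i (0 : R) = 0 := by
  have := hpd_const i 0; simpa using this

lemma pd_one' (pd : Fin 4 → R → R)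
    (hpd_const : ∀ i (c : ℝ), pd i (algebraMap ℝ R c) = 0) (i : Fin 4) :
    pd i (1 : R) = 0 := by
  have := hpd_const i 1; simpa using this

lemma pd_sum' (pd : Fin 4 → R → R)
    (hpd_add : ∀ i (a b : R), pd i (a + b) = pd i a + pd i b)
    (hpd_const : ∀ i (c : ℝ), pd i (algebraMap ℝ R c) = 0)
    (i : Fin 4) (f : Fin 4 → R) :
    pd i (∑ x, f x) = ∑ x, pd i (f x) := by
  have : pd i = (AddMonoidHom.mk' (pd i) (hpd_add i) : R →+ R) := rfl
  rw [this, map_sum]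

/-- collapse of a delta sum -/
lemma delta_collapse (d : Fin 4 → Fin 4 → R)
    (hd : ∀ i j, d i j = if i = j then 1 else 0) (a : Fin 4) (f : Fin 4 → R) :
    (∑ b, d a b * f b) = f a := by
  simp [hd]

lemma raise' (g ginv : Fin 4 → Fin 4 → R)
    (hg_symm : ∀ i j, g i j = g j i)
    (hginv_symm : ∀ i j, ginv i j = ginv j i)
    (hginv : ∀ i j, (∑ k, g i k * ginv k j) = if i = j then (1 : R) else 0)
    (v vl : Fin 4 → R) (hvl : ∀ m, vl m = ∑ a, g m a * v a) (a : Fin 4) :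
    v a = ∑ m, ginv a m * vl m := by
  have : (∑ m, ginv a m * vl m) = ∑ b, (∑ m, g b m * ginv m a) * v b := by
    simp only [hvl, Finset.mul_sum]
    rw [Finset.sum_comm]
    apply Finset.sum_congr rfl; intro b _
    rw [Finset.sum_mul]
    apply Finset.sum_congr rfl; intro m _
    rw [hg_symm b m, hginv_symm a m]; ring
  rw [this]
  simp [hginv, eq_comm]

/-- ∇ commutes with lowering: cov1 of the lowered form equals g · covV. -/
lemma lower' (pd : Fin 4 → R → R) (g : Fin 4 → Fin 4 → R) (Γ : Fin 4 → Fin 4 → Fin 4 → R)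
    (hpd_add : ∀ i (a b : R), pd i (a + b) = pd i a + pd i b)
    (hpd_mul : ∀ i (a b : R), pd i (a * b) = pd i a * b + a * pd i b)
    (hpd_const : ∀ i (c : ℝ), pd i (algebraMap ℝ R c) = 0)
    (hΓsymm : ∀ k i j, Γ k i j = Γ k j i)
    (hmc : ∀ k i j, pd k (g i j) = ∑ l, (Γ l k i * g l j + Γ l k j * g i l))
    (v vl : Fin 4 → R) (hvl : ∀ m, vl m = ∑ a, g m a * v a) (i b : Fin 4) :
    cov1 pd Γ vl i b = ∑ a, g b a * covV pd Γ v i a := by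
  unfold cov1 covV
  have e1 : pd i (vl b) = ∑ a, (pd i (g b a) * v a + g b a * pd i (v a)) := by
    rw [hvl, pd_sum' pd hpd_add hpd_const]
    exact Finset.sum_congr rfl fun a _ => hpd_mul i _ _
  rw [e1]
  simp only [hvl, hmc, Fin.sum_univ_four]
  ring

/-- covV in terms of cov1 of the lowered form. -/
lemma covV_raise' (pd : Fin 4 → R → R) (g ginv : Fin 4 → Fin 4 → R) (Γ : Fin 4 → Fin 4 → Fin 4 → R)
    (hpd_add : ∀ i (a b : R), pd i (a + b) = pd i a + pd i b)
    (hpd_mul : ∀ i (a b : R), pd i (a * b) = pd i a * b + a * pd i b)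
    (hpd_const : ∀ i (c : ℝ), pd i (algebraMap ℝ R c) = 0)
    (hg_symm : ∀ i j, g i j = g j i)
    (hginv_symm : ∀ i j, ginv i j = ginv j i)
    (hginv : ∀ i j, (∑ k, g i k * ginv k j) = if i = j then (1 : R) else 0)
    (hΓsymm : ∀ k i j, Γ k i j = Γ k j i)
    (hmc : ∀ k i j, pd k (g i j) = ∑ l, (Γ l k i * g l j + Γ l k j * g i l))
    (v vl : Fin 4 → R) (hvl : ∀ m, vl m = ∑ a, g m a * v a) (i k : Fin 4) :
    covV pd Γ v i k = ∑ b, ginv k b * cov1 pd Γ vl i b := by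
  have step1 : (∑ b, ginv k b * cov1 pd Γ vl i b)
      = ∑ b, ginv k b * ∑ a, g b a * covV pd Γ v i a := by
    apply Finset.sum_congr rfl; intro b _
    rw [lower' pd g Γ hpd_add hpd_mul hpd_const hΓsymm hmc v vl hvl]
  have step2 : (∑ b, ginv k b * ∑ a, g b a * covV pd Γ v i a)
      = ∑ a, (∑ b, g a b * ginv b k) * covV pd Γ v i a := by
    simp only [Finset.mul_sum, Finset.sum_mul]
    rw [Finset.sum_comm]
    apply Finset.sum_congr rfl; intro b _
    apply Finset.sum_congr rfl; intro a _
    rw [hg_symm b a, hginv_symm k a]; ring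
  rw [step1, step2]
  simp [hginv, eq_comm]

lemma lemE' (pd : Fin 4 → R → R) (Γ : Fin 4 → Fin 4 → Fin 4 → R)
    (hΓsymm : ∀ k i j, Γ k i j = Γ k j i)
    (K : Fin 4 → Fin 4 → R) (Z : Fin 4 → R)
    (hLZK : ∀ i j, (∑ a, Z a * pd a (K i j)) +
      (∑ a, K a j * pd i (Z a)) + (∑ a, K i a * pd j (Z a)) = 0)
    (i j : Fin 4) :
    (∑ a, Z a * cov2 pd Γ K a i j)
      = -∑ a, (K a j * covV pd Γ Z i a + K i a * covV pd Γ Z j a) := by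
  have h1 : (∑ a, ∑ l, Z a * (Γ l a i * K l j)) = ∑ a, ∑ l, K a j * (Γ a i l * Z l) := by
    rw [Finset.sum_comm]
    apply Finset.sum_congr rfl; intro a _
    apply Finset.sum_congr rfl; intro l _
    rw [hΓsymm a l i]; ring
  have h2 : (∑ a, ∑ l, Z a * (Γ l a j * K i l)) = ∑ a, ∑ l, K i a * (Γ a j l * Z l) := by
    rw [Finset.sum_comm]
    apply Finset.sum_congr rfl; intro a _
    apply Finset.sum_congr rfl; intro l _
    rw [hΓsymm a l j]; ring
  have h3 := hLZK i j
  simp only [cov2, covV, Fin.sum_univ_four] at h1 h2 h3 ⊢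
  linear_combination h3 - h1 - h2

lemma lemF' (pd : Fin 4 → R → R) (Γ : Fin 4 → Fin 4 → Fin 4 → R)
    (hpd_add : ∀ i (a b : R), pd i (a + b) = pd i a + pd i b)
    (hpd_mul : ∀ i (a b : R), pd i (a * b) = pd i a * b + a * pd i b)
    (hpd_const : ∀ i (c : ℝ), pd i (algebraMap ℝ R c) = 0)
    (K : Fin 4 → Fin 4 → R) (Z Yl : Fin 4 → R)
    (hYl : ∀ m, Yl m = ∑ a, K m a * Z a) (i j : Fin 4) :
    cov1 pd Γ Yl i j
      = (∑ a, cov2 pd Γ K i j a * Z a) + ∑ a, K j a * covV pd Γ Z i a := by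
  have e1 : pd i (Yl j) = ∑ a, (pd i (K j a) * Z a + K j a * pd i (Z a)) := by
    rw [hYl, pd_sum' pd hpd_add hpd_const]
    exact Finset.sum_congr rfl fun a _ => hpd_mul i _ _
  unfold cov1 cov2 covV
  rw [e1]
  simp only [hYl, Fin.sum_univ_four]
  ring

lemma cov2_symm' (pd : Fin 4 → R → R) (Γ : Fin 4 → Fin 4 → Fin 4 → R)
    (K : Fin 4 → Fin 4 → R) (hKsym : ∀ i j, K i j = K j i) (x y z : Fin 4) :
    cov2 pd Γ K x y z = cov2 pd Γ K x z y := by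
  unfold cov2
  rw [hKsym y z]
  simp only [Fin.sum_univ_four]
  linear_combination (-(Γ 0 x y)) * hKsym 0 z + Γ 0 x z * hKsym 0 y + (-(Γ 1 x y)) * hKsym 1 z + Γ 1 x z * hKsym 1 y + (-(Γ 2 x y)) * hKsym 2 z + Γ 2 x z * hKsym 2 y + (-(Γ 3 x y)) * hKsym 3 z + Γ 3 x z * hKsym 3 y


/-- if Z is a Killing vector, K a Killing tensor invariant under Z, and the
Papapetrou field ∇Z commutes with K, then Y = K(Z) is a Killing vector and [Z,Y] = 0. -/
theorem stmt9
    (pd : Fin 4 → R → R) (g ginv : Fin 4 → Fin 4 → R) (Γ : Fin 4 → Fin 4 → Fin 4 → R)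
    (hpd_add : ∀ i a b, pd i (a + b) = pd i a + pd i b)
    (hpd_mul : ∀ i a b, pd i (a * b) = pd i a * b + a * pd i b)
    (hpd_const : ∀ i (c : ℝ), pd i (algebraMap ℝ R c) = 0)
    (hpd_comm : ∀ i j a, pd i (pd j a) = pd j (pd i a))
    (hg_symm : ∀ i j, g i j = g j i)
    (hginv_symm : ∀ i j, ginv i j = ginv j i)
    (hginv : ∀ i j, (∑ k, g i k * ginv k j) = if i = j then (1 : R) else 0)
    (hΓsymm : ∀ k i j, Γ k i j = Γ k j i)
    (hmc : ∀ k i j, pd k (g i j) = ∑ l, (Γ l k i * g l j + Γ l k j * g i l))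
    (K : Fin 4 → Fin 4 → R) (hKsym : ∀ i j, K i j = K j i)
    (hKillingT : ∀ i j k,
      cov2 pd Γ K i j k + cov2 pd Γ K j k i + cov2 pd Γ K k i j = 0)
    (Z : Fin 4 → R) (Zl : Fin 4 → R) (hZl : ∀ m, Zl m = ∑ a, g m a * Z a)
    (hZKilling : ∀ i j, cov1 pd Γ Zl i j + cov1 pd Γ Zl j i = 0)
    (hLZK : ∀ i j, (∑ a, Z a * pd a (K i j)) +
      (∑ a, K a j * pd i (Z a)) + (∑ a, K i a * pd j (Z a)) = 0)
    (hComm : ∀ i j, (∑ a, ∑ b, cov1 pd Γ Zl i a * ginv a b * K b j) =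
      ∑ a, ∑ b, K i a * ginv a b * cov1 pd Γ Zl b j)
    (Y : Fin 4 → R) (hY : ∀ m, Y m = ∑ a, ∑ b, ginv m a * K a b * Z b)
    (Yl : Fin 4 → R) (hYl : ∀ m, Yl m = ∑ a, K m a * Z a) :
    (∀ i j, cov1 pd Γ Yl i j + cov1 pd Γ Yl j i = 0) ∧
    (∀ k, (∑ a, Z a * pd a (Y k)) - (∑ a, Y a * pd a (Z k)) = 0) := by
  have hNZ : ∀ i a, covV pd Γ Z i a = ∑ b, ginv a b * cov1 pd Γ Zl i b :=
    fun i a => covV_raise' pd g ginv Γ hpd_add hpd_mul hpd_const hg_symm hginv_symm hginv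
      hΓsymm hmc Z Zl hZl i a
  -- Yl is the lowering of Y
  have hYlg : ∀ m, Yl m = ∑ a, g m a * Y a := by
    intro m
    have s1 : (∑ a, g m a * Y a) = ∑ c, (∑ a, g m a * ginv a c) * (∑ b, K c b * Z b) := by
      simp only [hY, Fin.sum_univ_four]
      ring
    rw [hYl m, s1]
    simp [hginv, eq_comm]
  have hNY : ∀ a k, covV pd Γ Y a k = ∑ b, ginv k b * cov1 pd Γ Yl a b :=
    fun a k => covV_raise' pd g ginv Γ hpd_add hpd_mul hpd_const hg_symm hginv_symm hginv
      hΓsymm hmc Y Yl hYlg a k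
  have hYr : ∀ a, Y a = ∑ m, ginv a m * Yl m :=
    raise' g ginv hg_symm hginv_symm hginv Y Yl hYlg
  constructor
  · intro i j
    have eF1 := lemF' pd Γ hpd_add hpd_mul hpd_const K Z Yl hYl i j
    have eF2 := lemF' pd Γ hpd_add hpd_mul hpd_const K Z Yl hYl j i
    have hE := lemE' pd Γ hΓsymm K Z hLZK i j
    have hKT : ∀ a, cov2 pd Γ K i j a + cov2 pd Γ K j i a + cov2 pd Γ K a i j = 0 := by
      intro a
      linear_combination hKillingT i j a - cov2_symm' pd Γ K hKsym j a i
    have hA : (∑ a, K a j * covV pd Γ Z i a)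
        = ∑ a, ∑ b, K i a * ginv a b * cov1 pd Γ Zl b j := by
      have hC := hComm i j
      simp only [hNZ, Fin.sum_univ_four] at hC ⊢
      linear_combination hC + (cov1 pd Γ Zl i 0 * K 0 j * hginv_symm 0 0 + cov1 pd Γ Zl i 0 * K 1 j * hginv_symm 1 0 + cov1 pd Γ Zl i 0 * K 2 j * hginv_symm 2 0 + cov1 pd Γ Zl i 0 * K 3 j * hginv_symm 3 0 + cov1 pd Γ Zl i 1 * K 0 j * hginv_symm 0 1 + cov1 pd Γ Zl i 1 * K 1 j * hginv_symm 1 1 + cov1 pd Γ Zl i 1 * K 2 j * hginv_symm 2 1 + cov1 pd Γ Zl i 1 * K 3 j * hginv_symm 3 1 + cov1 pd Γ Zl i 2 * K 0 j * hginv_symm 0 2 + cov1 pd Γ Zl i 2 * K 1 j * hginv_symm 1 2 + cov1 pd Γ Zl i 2 * K 2 j * hginv_symm 2 2 + cov1 pd Γ Zl i 2 * K 3 j * hginv_symm 3 2 + cov1 pd Γ Zl i 3 * K 0 j * hginv_symm 0 3 + cov1 pd Γ Zl i 3 * K 1 j * hginv_symm 1 3 + cov1 pd Γ Zl i 3 *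 K 2 j * hginv_symm 2 3 + cov1 pd Γ Zl i 3 * K 3 j * hginv_symm 3 3)
    have hB : (∑ a, K i a * covV pd Γ Z j a)
        = -∑ a, ∑ b, K i a * ginv a b * cov1 pd Γ Zl b j := by
      simp only [hNZ, Fin.sum_univ_four]
      linear_combination (K i 0 * ginv 0 0 * hZKilling j 0 + K i 0 * ginv 0 1 * hZKilling j 1 + K i 0 * ginv 0 2 * hZKilling j 2 + K i 0 * ginv 0 3 * hZKilling j 3 + K i 1 * ginv 1 0 * hZKilling j 0 + K i 1 * ginv 1 1 * hZKilling j 1 + K i 1 * ginv 1 2 * hZKilling j 2 + K i 1 * ginv 1 3 * hZKilling j 3 + K i 2 * ginv 2 0 * hZKilling j 0 + K i 2 * ginv 2 1 * hZKilling j 1 + K i 2 * ginv 2 2 * hZKilling j 2 + K i 2 * ginv 2 3 * hZKilling j 3 + K i 3 * ginv 3 0 * hZKilling j 0 + K i 3 * ginv 3 1 * hZKilling j 1 + K i 3 * ginv 3 2 * hZKilling j 2 + K i 3 * ginv 3 3 * hZKilling j 3)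
    simp only [Fin.sum_univ_four] at eF1 eF2 hE hA hB
    linear_combination eF1 + eF2 - hE + 2 * hA + 2 * hB + (Z 0 * hKT 0 + Z 1 * hKT 1 + Z 2 * hKT 2 + Z 3 * hKT 3 + covV pd Γ Z i 0 * hKsym j 0 + covV pd Γ Z i 1 * hKsym j 1 + covV pd Γ Z i 2 * hKsym j 2 + covV pd Γ Z i 3 * hKsym j 3)
  · intro k
    have hP : ∀ b, (∑ a, Z a * cov1 pd Γ Yl a b) = -∑ a, Yl a * covV pd Γ Z b a := by
      intro b
      have eF := fun a => lemF' pd Γ hpd_add hpd_mul hpd_const K Z Yl hYl a b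
      have eE := fun c => lemE' pd Γ hΓsymm K Z hLZK b c
      have eY := hYl
      simp only [Fin.sum_univ_four] at eF eE eY ⊢
      linear_combination (Z 0 * eF 0 + Z 1 * eF 1 + Z 2 * eF 2 + Z 3 * eF 3 + Z 0 * eE 0 + Z 1 * eE 1 + Z 2 * eE 2 + Z 3 * eE 3 + covV pd Γ Z b 0 * eY 0 + covV pd Γ Z b 1 * eY 1 + covV pd Γ Z b 2 * eY 2 + covV pd Γ Z b 3 * eY 3)
    have hM : ∀ c k', (∑ a, ginv c a * covV pd Γ Z a k')
        = -∑ a, ginv k' a * covV pd Γ Z a c := by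
      intro c k'
      simp only [hNZ, Fin.sum_univ_four]
      linear_combination (ginv c 0 * ginv k' 0 * hZKilling 0 0 + ginv c 0 * ginv k' 1 * hZKilling 0 1 + ginv c 0 * ginv k' 2 * hZKilling 0 2 + ginv c 0 * ginv k' 3 * hZKilling 0 3 + ginv c 1 * ginv k' 0 * hZKilling 1 0 + ginv c 1 * ginv k' 1 * hZKilling 1 1 + ginv c 1 * ginv k' 2 * hZKilling 1 2 + ginv c 1 * ginv k' 3 * hZKilling 1 3 + ginv c 2 * ginv k' 0 * hZKilling 2 0 + ginv c 2 * ginv k' 1 * hZKilling 2 1 + ginv c 2 * ginv k' 2 * hZKilling 2 2 + ginv c 2 * ginv k' 3 * hZKilling 2 3 + ginv c 3 * ginv k' 0 * hZKilling 3 0 + ginv c 3 * ginv k' 1 * hZKilling 3 1 + ginv c 3 * ginv k' 2 * hZKilling 3 2 + ginv c 3 * ginv k' 3 * hZKilling 3 3)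
    have gY : ∀ a, pd a (Y k) = covV pd Γ Y a k - ∑ j, Γ k a j * Y j := by
      intro a; simp only [covV]; ring
    have gZ : ∀ a, pd a (Z k) = covV pd Γ Z a k - ∑ j, Γ k a j * Z j := by
      intro a; simp only [covV]; ring
    have eNY := fun a => hNY a k
    have eP := hP
    have eM := fun m => hM m k
    have eYr := hYr
    simp only [gY, gZ, Fin.sum_univ_four] at eNY eP eM eYr ⊢
    linear_combination (-(Z 0 * Y 0 * hΓsymm k 0 0 + Z 0 * Y 1 * hΓsymm k 0 1 + Z 0 * Y 2 * hΓsymm k 0 2 + Z 0 * Y 3 * hΓsymm k 0 3 + Z 1 * Y 0 * hΓsymm k 1 0 + Z 1 * Y 1 * hΓsymm k 1 1 + Z 1 * Y 2 * hΓsymm k 1 2 + Z 1 * Y 3 * hΓsymm k 1 3 + Z 2 * Y 0 * hΓsymm k 2 0 + Z 2 * Y 1 * hΓsymm k 2 1 + Z 2 * Y 2 * hΓsymm k 2 2 + Z 2 * Y 3 * hΓsymm k 2 3 + Z 3 * Y 0 * hΓsymm k 3 0 + Z 3 * Y 1 * hΓsymm k 3 1 + Z 3 * Y 2 * hΓsymm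 k 3 2 + Z 3 * Y 3 * hΓsymm k 3 3) + Z 0 * eNY 0 + Z 1 * eNY 1 + Z 2 * eNY 2 + Z 3 * eNY 3 + ginv k 0 * eP 0 + ginv k 1 * eP 1 + ginv k 2 * eP 2 + ginv k 3 * eP 3 - (covV pd Γ Z 0 k * eYr 0 + covV pd Γ Z 1 k * eYr 1 + covV pd Γ Z 2 k * eYr 2 + covV pd Γ Z 3 k * eYr 3) - (Yl 0 * covV pd Γ Z 0 k * hginv_symm 0 0 + Yl 1 * covV pd Γ Z 0 k * hginv_symm 0 1 + Yl 2 * covV pd Γ Z 0 k * hginv_symm 0 2 + Yl 3 * covV pd Γ Z 0 k * hginv_symm 0 3 + Yl 0 * covV pd Γ Z 1 k * hginv_symm 1 0 + Yl 1 * covV pd Γ Z 1 k * hginv_symm 1 1 + Yl 2 * covV pd Γ Z 1 k * hginv_symm 1 2 + Yl 3 * covV pd Γ Z 1 k * hginv_symm 1 3 + Yl 0 * covV pd Γ Z 2 k * hginv_symm 2 0 + Yl 1 * covV pd Γ Z 2 k * hginv_symm 2 1 + Yl 2 * covV pd Γ Z 2 k * hginv_symm 2 2 + Yl 3 * covV pd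 Γ Z 2 k * hginv_symm 2 3 + Yl 0 * covV pd Γ Z 3 k * hginv_symm 3 0 + Yl 1 * covV pd Γ Z 3 k * hginv_symm 3 1 + Yl 2 * covV pd Γ Z 3 k * hginv_symm 3 2 + Yl 3 * covV pd Γ Z 3 k * hginv_symm 3 3) - (Yl 0 * eM 0 + Yl 1 * eM 1 + Yl 2 * eM 2 + Yl 3 * eM 3))
end
end

section
/- Let 𝒲 be a complex-linear, self-adjoint, traceless endomorphism of a 3-dimensional complex vector space with inner product (the self-dual Weyl operator), and set a = Tr 𝒲², b = Tr 𝒲³. Then 𝒲 has exactly two distinct eigenvalues with the double eigenvalue nonzero (i.e. eigenvalues ρ, ρ, -2ρ with ρ ≠ 0, Petrov type D) if and only if a ≠ 0 and 𝒲² - (b/a)𝒲 - (a/3) Id = 0. -/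
/-! If `(W - ρ)(W + 2ρ) = 0` then `W² = 2ρ² - ρW`, whence `a = 6ρ²` and `b = -6ρ³`.
Conversely, write the relation as `W² = cW + a/3` with `c = b/a`. Cayley–Hamilton for a traceless
`3 × 3` matrix gives `W³ = (a/2)W + det W`, while the relation gives `W³ = (c² + a/3)W + ca/3`;
taking the trace of the difference kills the scalar part, leaving `(c² - a/6)W = 0`.
Since `a ≠ 0` forces `W ≠ 0`, we get `a/3 = 2c²`, and `ρ = -c` works. -/

open Matrix

namespace Matrix

variable {n R K : Type*} [Fintype n] [DecidableEq n]

theorem sub_smul_one_mul_add_two_smul_one_eq_zero_iff [CommRing R] (W : Matrix n n R) (ρ : R) :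
    (W - ρ • (1 : Matrix n n R)) * (W + (2 * ρ) • 1) = 0 ↔
      W * W = (2 * ρ ^ 2) • (1 : Matrix n n R) - ρ • W := by
  have expand : (W - ρ • (1 : Matrix n n R)) * (W + (2 * ρ) • 1)
      = W * W + ρ • W - (2 * ρ ^ 2) • 1 := by
    simp only [sub_mul, mul_add, smul_mul, Matrix.mul_smul, smul_smul, one_mul, mul_one]
    module
  rw [expand, sub_eq_zero, ← eq_sub_iff_add_eq]

section Traces

variable [CommRing R] {W : Matrix n n R} {ρ : R}

theorem trace_mul_self_of_mul_self_eq (htr : trace W = 0)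
    (hW : W * W = (2 * ρ ^ 2) • (1 : Matrix n n R) - ρ • W) :
    trace (W * W) = 2 * ρ ^ 2 * Fintype.card n := by
  simp [hW, trace_sub, trace_smul, htr]

theorem trace_mul_self_mul_self_of_mul_self_eq (htr : trace W = 0)
    (hW : W * W = (2 * ρ ^ 2) • (1 : Matrix n n R) - ρ • W) :
    trace (W * W * W) = -(2 * ρ ^ 3 * Fintype.card n) := by
  have hcube : W * W * W = (2 * ρ ^ 2) • W - ρ • (W * W) := by
    rw [hW, sub_mul, smul_mul, smul_mul, one_mul, ← hW]
  rw [hcube, trace_sub, trace_smul, trace_smul, htr,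
    trace_mul_self_of_mul_self_eq htr hW, smul_eq_mul, smul_eq_mul]
  ring

end Traces

theorem cayley_hamilton_fin_three [CommRing R] (W : Matrix (Fin 3) (Fin 3) R) :
    (2 : R) • (W * W * W) - (2 * trace W) • (W * W) + (trace W ^ 2 - trace (W * W)) • W
      - (2 * W.det) • (1 : Matrix (Fin 3) (Fin 3) R) = 0 := by
  ext i j
  fin_cases i <;> fin_cases j <;>
    · simp [mul_apply, trace, det_fin_three, Fin.sum_univ_succ]
      ring

theorem mul_self_mul_self_eq_of_trace_eq_zero [Field K] [NeZero (2 : K)]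
    {W : Matrix (Fin 3) (Fin 3) K} (htr : trace W = 0) :
    W * W * W = (trace (W * W) / 2) • W + W.det • (1 : Matrix (Fin 3) (Fin 3) K) := by
  have hCH := cayley_hamilton_fin_three W
  rw [htr] at hCH
  apply smul_right_injective _ (two_ne_zero : (2 : K) ≠ 0)
  simp only [smul_add, smul_smul, mul_div_cancel₀ _ (two_ne_zero : (2 : K) ≠ 0)]
  linear_combination (norm := module) hCH

/-- A nonzero traceless `3 × 3` matrix satisfying a quadratic equation `W² = c W + d` has the
eigenvalues `-c, -c, 2c`. -/
theorem eq_two_mul_sq_of_mul_self_eq_smul_add_smul_one [Field K] [CharZero K]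
    {W : Matrix (Fin 3) (Fin 3) K} (htr : trace W = 0) (hW : W ≠ 0) {c d : K}
    (hq : W * W = c • W + d • (1 : Matrix (Fin 3) (Fin 3) K)) :
    d = 2 * c ^ 2 := by
  have hcube : W * W * W = (c ^ 2 + d) • W + (c * d) • (1 : Matrix (Fin 3) (Fin 3) K) := by
    rw [hq, add_mul, smul_mul, smul_mul, one_mul, hq]
    module
  have htr2 : trace (W * W) = 3 * d := by
    simp [hq, trace_add, trace_smul, htr, mul_comm]
  have hCH := mul_self_mul_self_eq_of_trace_eq_zero htr
  rw [htr2, hcube] at hCH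
  have hk : (c ^ 2 - d / 2) • W = (W.det - c * d) • (1 : Matrix (Fin 3) (Fin 3) K) := by
    linear_combination (norm := module) hCH
  have hdet : W.det - c * d = 0 := by
    simpa [trace_smul, htr] using congrArg trace hk
  rw [hdet, zero_smul, smul_eq_zero] at hk
  linear_combination -2 * hk.resolve_right hW

end Matrix

theorem stmt13_general (W : Matrix (Fin 3) (Fin 3) ℂ)
    (htr : Matrix.trace W = 0) :
    (∃ ρ : ℂ, ρ ≠ 0 ∧ (W - ρ • (1 : Matrix (Fin 3) (Fin 3) ℂ)) * (W + (2 * ρ) • 1) = 0) ↔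
    (Matrix.trace (W * W) ≠ 0 ∧
      W * W - (Matrix.trace (W * W * W) / Matrix.trace (W * W)) • W
        - (Matrix.trace (W * W) / 3) • (1 : Matrix (Fin 3) (Fin 3) ℂ) = 0) := by
  simp only [sub_smul_one_mul_add_two_smul_one_eq_zero_iff]
  constructor
  · rintro ⟨ρ, hρ, hq⟩
    have ha := trace_mul_self_of_mul_self_eq htr hq
    have hb := trace_mul_self_mul_self_of_mul_self_eq htr hq
    simp only [Fintype.card_fin, Nat.cast_ofNat] at ha hb
    have hc : -(2 * ρ ^ 3 * 3) / (2 * ρ ^ 2 * 3) = -ρ := by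
      field_simp
    refine ⟨by rw [ha]; simp [hρ], ?_⟩
    rw [ha, hb, hc, hq]
    module
  · rintro ⟨ha, hq⟩
    set c := trace (W * W * W) / trace (W * W)
    rw [sub_sub, sub_eq_zero] at hq
    have hd := eq_two_mul_sq_of_mul_self_eq_smul_add_smul_one htr (by rintro rfl; simp at ha) hq
    refine ⟨-c, ?_, ?_⟩
    · intro hc
      exact ha (by linear_combination 3 * hd - 6 * c * hc)
    · rw [hq, hd]
      module

/-- a traceless self-adjoint operator 𝒲 on ℂ³ has exactly two distinct
eigenvalues ρ, ρ, -2ρ with ρ ≠ 0 (Petrov type D) iff a = Tr 𝒲² ≠ 0 and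
𝒲² - (b/a)𝒲 - (a/3)Id = 0, where b = Tr 𝒲³. -/
theorem stmt13 (W : Matrix (Fin 3) (Fin 3) ℂ) (hsym : Wᵀ = W)
    (htr : Matrix.trace W = 0) :
    (∃ ρ : ℂ, ρ ≠ 0 ∧ (W - ρ • (1 : Matrix (Fin 3) (Fin 3) ℂ)) * (W + (2 * ρ) • 1) = 0) ↔
    (Matrix.trace (W * W) ≠ 0 ∧
      W * W - (Matrix.trace (W * W * W) / Matrix.trace (W * W)) • W
        - (Matrix.trace (W * W) / 3) • (1 : Matrix (Fin 3) (Fin 3) ℂ) = 0) :=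
  stmt13_general W htr
end

section
/- For any vector field Z and any 2-form 𝒰 on a pseudo-Riemannian manifold, the Lie derivative decomposes as L_Z 𝒰 = ∇_Z 𝒰 + ½[dZ♭, 𝒰] + ½{L_Z g, 𝒰}, where [·,·] and {·,·} are the commutator and anticommutator of the associated endomorphisms. In particular, if Z is a Killing vector leaving 𝒰 invariant (L_Z g = 0, L_Z 𝒰 = 0), then ∇_Z 𝒰 = 0 if and only if the Papapetrou field dZ♭ commutes with 𝒰. -/
noncomputable section

/-!
Abstract component tensor calculus on a 4-dimensional pseudo-Riemannian manifold.
`R` plays the role of the ring of smooth functions, `pd i` of the coordinate partial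
derivatives, `g`/`ginv` of the components of the metric and its inverse, and `Γ` of the
Christoffel symbols of the Levi-Civita connection.
-/

variable {R : Type*} [CommRing R] [Algebra ℝ R]

lemma stmt16.contract1 (g ginv : Fin 4 → Fin 4 → R)
    (hginv : ∀ i j, (∑ k, g i k * ginv k j) = if i = j then (1 : R) else 0)
    (X f : Fin 4 → R) :
    (∑ a, ∑ b, (∑ c, X c * g c a) * ginv a b * f b) = ∑ a, X a * f a := by
  have H00 : g 0 0 * ginv 0 0 + g 0 1 * ginv 1 0 + g 0 2 * ginv 2 0 + g 0 3 * ginv 3 0 = (1:R) := by simpa [Fin.sum_univ_four] using hginv 0 0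
  have H01 : g 0 0 * ginv 0 1 + g 0 1 * ginv 1 1 + g 0 2 * ginv 2 1 + g 0 3 * ginv 3 1 = (0:R) := by simpa [Fin.sum_univ_four] using hginv 0 1
  have H02 : g 0 0 * ginv 0 2 + g 0 1 * ginv 1 2 + g 0 2 * ginv 2 2 + g 0 3 * ginv 3 2 = (0:R) := by simpa [Fin.sum_univ_four] using hginv 0 2
  have H03 : g 0 0 * ginv 0 3 + g 0 1 * ginv 1 3 + g 0 2 * ginv 2 3 + g 0 3 * ginv 3 3 = (0:R) := by simpa [Fin.sum_univ_four] using hginv 0 3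
  have H10 : g 1 0 * ginv 0 0 + g 1 1 * ginv 1 0 + g 1 2 * ginv 2 0 + g 1 3 * ginv 3 0 = (0:R) := by simpa [Fin.sum_univ_four] using hginv 1 0
  have H11 : g 1 0 * ginv 0 1 + g 1 1 * ginv 1 1 + g 1 2 * ginv 2 1 + g 1 3 * ginv 3 1 = (1:R) := by simpa [Fin.sum_univ_four] using hginv 1 1
  have H12 : g 1 0 * ginv 0 2 + g 1 1 * ginv 1 2 + g 1 2 * ginv 2 2 + g 1 3 * ginv 3 2 = (0:R) := by simpa [Fin.sum_univ_four] using hginv 1 2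
  have H13 : g 1 0 * ginv 0 3 + g 1 1 * ginv 1 3 + g 1 2 * ginv 2 3 + g 1 3 * ginv 3 3 = (0:R) := by simpa [Fin.sum_univ_four] using hginv 1 3
  have H20 : g 2 0 * ginv 0 0 + g 2 1 * ginv 1 0 + g 2 2 * ginv 2 0 + g 2 3 * ginv 3 0 = (0:R) := by simpa [Fin.sum_univ_four] using hginv 2 0
  have H21 : g 2 0 * ginv 0 1 + g 2 1 * ginv 1 1 + g 2 2 * ginv 2 1 + g 2 3 * ginv 3 1 = (0:R) := by simpa [Fin.sum_univ_four] using hginv 2 1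
  have H22 : g 2 0 * ginv 0 2 + g 2 1 * ginv 1 2 + g 2 2 * ginv 2 2 + g 2 3 * ginv 3 2 = (1:R) := by simpa [Fin.sum_univ_four] using hginv 2 2
  have H23 : g 2 0 * ginv 0 3 + g 2 1 * ginv 1 3 + g 2 2 * ginv 2 3 + g 2 3 * ginv 3 3 = (0:R) := by simpa [Fin.sum_univ_four] using hginv 2 3
  have H30 : g 3 0 * ginv 0 0 + g 3 1 * ginv 1 0 + g 3 2 * ginv 2 0 + g 3 3 * ginv 3 0 = (0:R) := by simpa [Fin.sum_univ_four] using hginv 3 0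
  have H31 : g 3 0 * ginv 0 1 + g 3 1 * ginv 1 1 + g 3 2 * ginv 2 1 + g 3 3 * ginv 3 1 = (0:R) := by simpa [Fin.sum_univ_four] using hginv 3 1
  have H32 : g 3 0 * ginv 0 2 + g 3 1 * ginv 1 2 + g 3 2 * ginv 2 2 + g 3 3 * ginv 3 2 = (0:R) := by simpa [Fin.sum_univ_four] using hginv 3 2
  have H33 : g 3 0 * ginv 0 3 + g 3 1 * ginv 1 3 + g 3 2 * ginv 2 3 + g 3 3 * ginv 3 3 = (1:R) := by simpa [Fin.sum_univ_four] using hginv 3 3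
  simp only [Fin.sum_univ_four]
  linear_combination X 0 * f 0 * H00 + X 0 * f 1 * H01 + X 0 * f 2 * H02 + X 0 * f 3 * H03 + X 1 * f 0 * H10 + X 1 * f 1 * H11 + X 1 * f 2 * H12 + X 1 * f 3 * H13 + X 2 * f 0 * H20 + X 2 * f 1 * H21 + X 2 * f 2 * H22 + X 2 * f 3 * H23 + X 3 * f 0 * H30 + X 3 * f 1 * H31 + X 3 * f 2 * H32 + X 3 * f 3 * H33

lemma stmt16.contract2 (g ginv : Fin 4 → Fin 4 → R)
    (hginv : ∀ i j, (∑ k, g i k * ginv k j) = if i = j then (1 : R) else 0)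
    (hginv_symm : ∀ i j, ginv i j = ginv j i)
    (X f : Fin 4 → R) :
    (∑ a, ∑ b, f a * ginv a b * (∑ c, X c * g c b)) = ∑ a, f a * X a := by
  have H00 : g 0 0 * ginv 0 0 + g 0 1 * ginv 1 0 + g 0 2 * ginv 2 0 + g 0 3 * ginv 3 0 = (1:R) := by simpa [Fin.sum_univ_four] using hginv 0 0
  have H01 : g 0 0 * ginv 0 1 + g 0 1 * ginv 1 1 + g 0 2 * ginv 2 1 + g 0 3 * ginv 3 1 = (0:R) := by simpa [Fin.sum_univ_four] using hginv 0 1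
  have H02 : g 0 0 * ginv 0 2 + g 0 1 * ginv 1 2 + g 0 2 * ginv 2 2 + g 0 3 * ginv 3 2 = (0:R) := by simpa [Fin.sum_univ_four] using hginv 0 2
  have H03 : g 0 0 * ginv 0 3 + g 0 1 * ginv 1 3 + g 0 2 * ginv 2 3 + g 0 3 * ginv 3 3 = (0:R) := by simpa [Fin.sum_univ_four] using hginv 0 3
  have H10 : g 1 0 * ginv 0 0 + g 1 1 * ginv 1 0 + g 1 2 * ginv 2 0 + g 1 3 * ginv 3 0 = (0:R) := by simpa [Fin.sum_univ_four] using hginv 1 0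
  have H11 : g 1 0 * ginv 0 1 + g 1 1 * ginv 1 1 + g 1 2 * ginv 2 1 + g 1 3 * ginv 3 1 = (1:R) := by simpa [Fin.sum_univ_four] using hginv 1 1
  have H12 : g 1 0 * ginv 0 2 + g 1 1 * ginv 1 2 + g 1 2 * ginv 2 2 + g 1 3 * ginv 3 2 = (0:R) := by simpa [Fin.sum_univ_four] using hginv 1 2
  have H13 : g 1 0 * ginv 0 3 + g 1 1 * ginv 1 3 + g 1 2 * ginv 2 3 + g 1 3 * ginv 3 3 = (0:R) := by simpa [Fin.sum_univ_four] using hginv 1 3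
  have H20 : g 2 0 * ginv 0 0 + g 2 1 * ginv 1 0 + g 2 2 * ginv 2 0 + g 2 3 * ginv 3 0 = (0:R) := by simpa [Fin.sum_univ_four] using hginv 2 0
  have H21 : g 2 0 * ginv 0 1 + g 2 1 * ginv 1 1 + g 2 2 * ginv 2 1 + g 2 3 * ginv 3 1 = (0:R) := by simpa [Fin.sum_univ_four] using hginv 2 1
  have H22 : g 2 0 * ginv 0 2 + g 2 1 * ginv 1 2 + g 2 2 * ginv 2 2 + g 2 3 * ginv 3 2 = (1:R) := by simpa [Fin.sum_univ_four] using hginv 2 2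
  have H23 : g 2 0 * ginv 0 3 + g 2 1 * ginv 1 3 + g 2 2 * ginv 2 3 + g 2 3 * ginv 3 3 = (0:R) := by simpa [Fin.sum_univ_four] using hginv 2 3
  have H30 : g 3 0 * ginv 0 0 + g 3 1 * ginv 1 0 + g 3 2 * ginv 2 0 + g 3 3 * ginv 3 0 = (0:R) := by simpa [Fin.sum_univ_four] using hginv 3 0
  have H31 : g 3 0 * ginv 0 1 + g 3 1 * ginv 1 1 + g 3 2 * ginv 2 1 + g 3 3 * ginv 3 1 = (0:R) := by simpa [Fin.sum_univ_four] using hginv 3 1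
  have H32 : g 3 0 * ginv 0 2 + g 3 1 * ginv 1 2 + g 3 2 * ginv 2 2 + g 3 3 * ginv 3 2 = (0:R) := by simpa [Fin.sum_univ_four] using hginv 3 2
  have H33 : g 3 0 * ginv 0 3 + g 3 1 * ginv 1 3 + g 3 2 * ginv 2 3 + g 3 3 * ginv 3 3 = (1:R) := by simpa [Fin.sum_univ_four] using hginv 3 3
  simp only [Fin.sum_univ_four]
  linear_combination f 0 * X 0 * H00 + f 0 * X 1 * H10 + f 0 * X 2 * H20 + f 0 * X 3 * H30 + f 1 * X 0 * H01 + f 1 * X 1 * H11 + f 1 * X 2 * H21 + f 1 * X 3 * H31 + f 2 * X 0 * H02 + f 2 * X 1 * H12 + f 2 * X 2 * H22 + f 2 * X 3 * H32 + f 3 * X 0 * H03 + f 3 * X 1 * H13 + f 3 * X 2 * H23 + f 3 * X 3 * H33 + f 0 * X 0 * g 0 0 * hginv_symm 0 0 + f 0 * X 1 * g 1 0 * hginv_symm 0 0 + f 0 * X 2 * g 2 0 * hginv_symm 0 0 + f 0 * X 3 * g 3 0 * hginv_symm 0 0 + f 0 * X 0 * g 0 1 * hginv_symm 0 1 + f 0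 * X 1 * g 1 1 * hginv_symm 0 1 + f 0 * X 2 * g 2 1 * hginv_symm 0 1 + f 0 * X 3 * g 3 1 * hginv_symm 0 1 + f 0 * X 0 * g 0 2 * hginv_symm 0 2 + f 0 * X 1 * g 1 2 * hginv_symm 0 2 + f 0 * X 2 * g 2 2 * hginv_symm 0 2 + f 0 * X 3 * g 3 2 * hginv_symm 0 2 + f 0 * X 0 * g 0 3 * hginv_symm 0 3 + f 0 * X 1 * g 1 3 * hginv_symm 0 3 + f 0 * X 2 * g 2 3 * hginv_symm 0 3 + f 0 * X 3 * g 3 3 * hginv_symm 0 3 + f 1 * X 0 * g 0 0 * hginv_symm 1 0 + f 1 * X 1 * g 1 0 * hginv_symm 1 0 + f 1 * X 2 * g 2 0 * hginv_symm 1 0 + f 1 * X 3 * g 3 0 * hginv_symm 1 0 + f 1 * X 0 * g 0 1 * hginv_symm 1 1 + f 1 * X 1 * g 1 1 * hginv_symm 1 1 + f 1 * X 2 * g 2 1 * hginv_symm 1 1 + f 1 * X 3 * g 3 1 * hginv_symm 1 1 + f 1 * X 0 * g 0 2 * hginv_symm 1 2 + f 1 * X 1 * g 1 2 * hginv_symm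 1 2 + f 1 * X 2 * g 2 2 * hginv_symm 1 2 + f 1 * X 3 * g 3 2 * hginv_symm 1 2 + f 1 * X 0 * g 0 3 * hginv_symm 1 3 + f 1 * X 1 * g 1 3 * hginv_symm 1 3 + f 1 * X 2 * g 2 3 * hginv_symm 1 3 + f 1 * X 3 * g 3 3 * hginv_symm 1 3 + f 2 * X 0 * g 0 0 * hginv_symm 2 0 + f 2 * X 1 * g 1 0 * hginv_symm 2 0 + f 2 * X 2 * g 2 0 * hginv_symm 2 0 + f 2 * X 3 * g 3 0 * hginv_symm 2 0 + f 2 * X 0 * g 0 1 * hginv_symm 2 1 + f 2 * X 1 * g 1 1 * hginv_symm 2 1 + f 2 * X 2 * g 2 1 * hginv_symm 2 1 + f 2 * X 3 * g 3 1 * hginv_symm 2 1 + f 2 * X 0 * g 0 2 * hginv_symm 2 2 + f 2 * X 1 * g 1 2 * hginv_symm 2 2 + f 2 * X 2 * g 2 2 * hginv_symm 2 2 + f 2 * X 3 * g 3 2 * hginv_symm 2 2 + f 2 * X 0 * g 0 3 * hginv_symm 2 3 + f 2 * X 1 * g 1 3 * hginv_symm 2 3 + f 2 * X 2 * g 2 3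 * hginv_symm 2 3 + f 2 * X 3 * g 3 3 * hginv_symm 2 3 + f 3 * X 0 * g 0 0 * hginv_symm 3 0 + f 3 * X 1 * g 1 0 * hginv_symm 3 0 + f 3 * X 2 * g 2 0 * hginv_symm 3 0 + f 3 * X 3 * g 3 0 * hginv_symm 3 0 + f 3 * X 0 * g 0 1 * hginv_symm 3 1 + f 3 * X 1 * g 1 1 * hginv_symm 3 1 + f 3 * X 2 * g 2 1 * hginv_symm 3 1 + f 3 * X 3 * g 3 1 * hginv_symm 3 1 + f 3 * X 0 * g 0 2 * hginv_symm 3 2 + f 3 * X 1 * g 1 2 * hginv_symm 3 2 + f 3 * X 2 * g 2 2 * hginv_symm 3 2 + f 3 * X 3 * g 3 2 * hginv_symm 3 2 + f 3 * X 0 * g 0 3 * hginv_symm 3 3 + f 3 * X 1 * g 1 3 * hginv_symm 3 3 + f 3 * X 2 * g 2 3 * hginv_symm 3 3 + f 3 * X 3 * g 3 3 * hginv_symm 3 3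

lemma stmt16.lemA (pd : Fin 4 → R → R) (g : Fin 4 → Fin 4 → R)
    (Γ : Fin 4 → Fin 4 → Fin 4 → R)
    (hg_symm : ∀ i j, g i j = g j i)
    (hpd_add : ∀ i a b, pd i (a + b) = pd i a + pd i b)
    (hpd_mul : ∀ i a b, pd i (a * b) = pd i a * b + a * pd i b)
    (hmc : ∀ k i j, pd k (g i j) = ∑ l, (Γ l k i * g l j + Γ l k j * g i l))
    (Z Zl : Fin 4 → R) (hZl : ∀ m, Zl m = ∑ a, g m a * Z a)
    (i a : Fin 4) :
    cov1 pd Γ Zl i a = ∑ c, covV pd Γ Z i c * g c a := by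
  simp only [cov1, covV, hZl, Fin.sum_univ_four, hpd_add, hpd_mul, hmc, hg_symm]
  ring

lemma stmt16.dZeq (pd : Fin 4 → R → R) (Γ : Fin 4 → Fin 4 → Fin 4 → R)
    (hΓsymm : ∀ k i j, Γ k i j = Γ k j i)
    (Zl : Fin 4 → R) (dZ : Fin 4 → Fin 4 → R)
    (hdZ : ∀ i j, dZ i j = pd i (Zl j) - pd j (Zl i)) (i a : Fin 4) :
    dZ i a = cov1 pd Γ Zl i a - cov1 pd Γ Zl a i := by
  simp only [hdZ, cov1, Fin.sum_univ_four]
  linear_combination Zl 0 * hΓsymm 0 i a + Zl 1 * hΓsymm 1 i a + Zl 2 * hΓsymm 2 i a + Zl 3 * hΓsymm 3 i a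

lemma stmt16.lie (pd : Fin 4 → R → R) (Γ : Fin 4 → Fin 4 → Fin 4 → R)
    (hΓsymm : ∀ k i j, Γ k i j = Γ k j i)
    (Z : Fin 4 → R) (Ω : Fin 4 → Fin 4 → R)
    (LZΩ : Fin 4 → Fin 4 → R)
    (hLZΩ : ∀ i j, LZΩ i j = (∑ a, Z a * pd a (Ω i j)) +
      (∑ a, Ω a j * pd i (Z a)) + ∑ a, Ω i a * pd j (Z a)) (i j : Fin 4) :
    LZΩ i j = (∑ a, Z a * cov2 pd Γ Ω a i j)
      + (∑ a, covV pd Γ Z i a * Ω a j) + ∑ a, Ω i a * covV pd Γ Z j a := by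
  simp only [hLZΩ, cov2, covV, Fin.sum_univ_four]
  linear_combination Z 0 * Ω 0 j * hΓsymm 0 0 i + Z 0 * Ω 1 j * hΓsymm 1 0 i + Z 0 * Ω 2 j * hΓsymm 2 0 i + Z 0 * Ω 3 j * hΓsymm 3 0 i + Z 1 * Ω 0 j * hΓsymm 0 1 i + Z 1 * Ω 1 j * hΓsymm 1 1 i + Z 1 * Ω 2 j * hΓsymm 2 1 i + Z 1 * Ω 3 j * hΓsymm 3 1 i + Z 2 * Ω 0 j * hΓsymm 0 2 i + Z 2 * Ω 1 j * hΓsymm 1 2 i + Z 2 * Ω 2 j * hΓsymm 2 2 i + Z 2 * Ω 3 j * hΓsymm 3 2 i + Z 3 * Ω 0 j * hΓsymm 0 3 i + Z 3 * Ω 1 j * hΓsymm 1 3 i + Z 3 * Ω 2 j * hΓsymm 2 3 i + Z 3 * Ω 3 j * hΓsymm 3 3 i + Z 0 * Ω i 0 * hΓsymm 0 0 j + Z 0 * Ω i 1 * hΓsymm 1 0 j + Z 0 * Ω i 2 * hΓsymm 2 0 j + Z 0 * Ω i 3 * hΓsymm 3 0 j + Z 1 * Ω i 0 * hΓsymm 0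 1 j + Z 1 * Ω i 1 * hΓsymm 1 1 j + Z 1 * Ω i 2 * hΓsymm 2 1 j + Z 1 * Ω i 3 * hΓsymm 3 1 j + Z 2 * Ω i 0 * hΓsymm 0 2 j + Z 2 * Ω i 1 * hΓsymm 1 2 j + Z 2 * Ω i 2 * hΓsymm 2 2 j + Z 2 * Ω i 3 * hΓsymm 3 2 j + Z 3 * Ω i 0 * hΓsymm 0 3 j + Z 3 * Ω i 1 * hΓsymm 1 3 j + Z 3 * Ω i 2 * hΓsymm 2 3 j + Z 3 * Ω i 3 * hΓsymm 3 3 j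


/-- for any vector field Z and 2-form Ω,
L_Z Ω = ∇_Z Ω + ½[dZ♭, Ω] + ½{L_Z g, Ω}; in particular, if Z is a Killing vector leaving
Ω invariant, then ∇_Z Ω = 0 iff the Papapetrou field dZ♭ commutes with Ω. -/
theorem stmt16
    (pd : Fin 4 → R → R) (g ginv : Fin 4 → Fin 4 → R) (Γ : Fin 4 → Fin 4 → Fin 4 → R)
    (hpd_add : ∀ i a b, pd i (a + b) = pd i a + pd i b)
    (hpd_mul : ∀ i a b, pd i (a * b) = pd i a * b + a * pd i b)
    (hpd_const : ∀ i (c : ℝ), pd i (algebraMap ℝ R c) = 0)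
    (hpd_comm : ∀ i j a, pd i (pd j a) = pd j (pd i a))
    (hg_symm : ∀ i j, g i j = g j i)
    (hginv_symm : ∀ i j, ginv i j = ginv j i)
    (hginv : ∀ i j, (∑ k, g i k * ginv k j) = if i = j then (1 : R) else 0)
    (hΓsymm : ∀ k i j, Γ k i j = Γ k j i)
    (hmc : ∀ k i j, pd k (g i j) = ∑ l, (Γ l k i * g l j + Γ l k j * g i l))
    (Z : Fin 4 → R) (Zl : Fin 4 → R) (hZl : ∀ m, Zl m = ∑ a, g m a * Z a)
    (Ω : Fin 4 → Fin 4 → R) (hΩ : ∀ i j, Ω i j = -Ω j i)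
    (dZ : Fin 4 → Fin 4 → R) (hdZ : ∀ i j, dZ i j = pd i (Zl j) - pd j (Zl i))
    (LZg : Fin 4 → Fin 4 → R)
    (hLZg : ∀ i j, LZg i j = cov1 pd Γ Zl i j + cov1 pd Γ Zl j i)
    (LZΩ : Fin 4 → Fin 4 → R)
    (hLZΩ : ∀ i j, LZΩ i j = (∑ a, Z a * pd a (Ω i j)) +
      (∑ a, Ω a j * pd i (Z a)) + ∑ a, Ω i a * pd j (Z a)) :
    (∀ i j, LZΩ i j = (∑ a, Z a * cov2 pd Γ Ω a i j)
      + algebraMap ℝ R (1/2) *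
          ((∑ a, ∑ b, dZ i a * ginv a b * Ω b j) - ∑ a, ∑ b, Ω i a * ginv a b * dZ b j)
      + algebraMap ℝ R (1/2) *
          ((∑ a, ∑ b, LZg i a * ginv a b * Ω b j) + ∑ a, ∑ b, Ω i a * ginv a b * LZg b j)) ∧
    ((∀ i j, LZg i j = 0) → (∀ i j, LZΩ i j = 0) →
      ((∀ i j, (∑ a, Z a * cov2 pd Γ Ω a i j) = 0) ↔
        (∀ i j, (∑ a, ∑ b, dZ i a * ginv a b * Ω b j) =
          ∑ a, ∑ b, Ω i a * ginv a b * dZ b j))) := by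

  have hhalf : (algebraMap ℝ R (1/2)) * 2 = 1 := by
    rw [show (2:R) = algebraMap ℝ R 2 from (map_ofNat (algebraMap ℝ R) 2).symm, ← map_mul]
    norm_num
  have hlemA : ∀ i a, cov1 pd Γ Zl i a = ∑ c, covV pd Γ Z i c * g c a := fun i a =>
    stmt16.lemA pd g Γ hg_symm hpd_add hpd_mul hmc Z Zl hZl i a
  have hdZ' : ∀ i a, dZ i a = cov1 pd Γ Zl i a - cov1 pd Γ Zl a i := fun i a =>
    stmt16.dZeq pd Γ hΓsymm Zl dZ hdZ i a
  have part1 : ∀ i j, LZΩ i j = (∑ a, Z a * cov2 pd Γ Ω a i j)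
      + algebraMap ℝ R (1/2) *
          ((∑ a, ∑ b, dZ i a * ginv a b * Ω b j) - ∑ a, ∑ b, Ω i a * ginv a b * dZ b j)
      + algebraMap ℝ R (1/2) *
          ((∑ a, ∑ b, LZg i a * ginv a b * Ω b j) + ∑ a, ∑ b, Ω i a * ginv a b * LZg b j) := by
    intro i j
    have h51 : (∑ a, ∑ b, dZ i a * ginv a b * Ω b j) + (∑ a, ∑ b, LZg i a * ginv a b * Ω b j)
        = 2 * ∑ a, covV pd Γ Z i a * Ω a j := by
      have hsum : ∀ a b, dZ i a * ginv a b * Ω b j + LZg i a * ginv a b * Ω b j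
          = 2 * ((∑ c, covV pd Γ Z i c * g c a) * ginv a b * Ω b j) := by
        intro a b
        have e1 : dZ i a + LZg i a = 2 * (∑ c, covV pd Γ Z i c * g c a) := by
          linear_combination (hdZ' i a) + (hLZg i a) + 2 * (hlemA i a)
        linear_combination (ginv a b * Ω b j) * e1
      calc (∑ a, ∑ b, dZ i a * ginv a b * Ω b j) + (∑ a, ∑ b, LZg i a * ginv a b * Ω b j)
          = ∑ a, ∑ b, 2 * ((∑ c, covV pd Γ Z i c * g c a) * ginv a b * Ω b j) := by
            rw [← Finset.sum_add_distrib]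
            refine Finset.sum_congr rfl fun a _ => ?_
            rw [← Finset.sum_add_distrib]
            exact Finset.sum_congr rfl fun b _ => hsum a b
        _ = 2 * ∑ a, ∑ b, (∑ c, covV pd Γ Z i c * g c a) * ginv a b * Ω b j := by
            simp_rw [Finset.mul_sum]
        _ = 2 * ∑ a, covV pd Γ Z i a * Ω a j := by
            rw [stmt16.contract1 g ginv hginv]
    have h52 : (∑ a, ∑ b, Ω i a * ginv a b * LZg b j) - (∑ a, ∑ b, Ω i a * ginv a b * dZ b j)
        = 2 * ∑ a, Ω i a * covV pd Γ Z j a := by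
      have hsum : ∀ a b, Ω i a * ginv a b * LZg b j - Ω i a * ginv a b * dZ b j
          = 2 * (Ω i a * ginv a b * (∑ c, covV pd Γ Z j c * g c b)) := by
        intro a b
        have e2 : LZg b j - dZ b j = 2 * (∑ c, covV pd Γ Z j c * g c b) := by
          linear_combination (hLZg b j) - (hdZ' b j) + 2 * (hlemA j b)
        linear_combination (Ω i a * ginv a b) * e2
      calc (∑ a, ∑ b, Ω i a * ginv a b * LZg b j) - (∑ a, ∑ b, Ω i a * ginv a b * dZ b j)
          = ∑ a, ∑ b, 2 * (Ω i a * ginv a b * (∑ c, covV pd Γ Z j c * g c b)) := by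
            rw [← Finset.sum_sub_distrib]
            refine Finset.sum_congr rfl fun a _ => ?_
            rw [← Finset.sum_sub_distrib]
            exact Finset.sum_congr rfl fun b _ => hsum a b
        _ = 2 * ∑ a, ∑ b, Ω i a * ginv a b * (∑ c, covV pd Γ Z j c * g c b) := by
            simp_rw [Finset.mul_sum]
        _ = 2 * ∑ a, Ω i a * covV pd Γ Z j a := by
            rw [stmt16.contract2 g ginv hginv hginv_symm]
    linear_combination (stmt16.lie pd Γ hΓsymm Z Ω LZΩ hLZΩ i j)
      - (algebraMap ℝ R (1/2)) * h51 - (algebraMap ℝ R (1/2)) * h52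
      - ((∑ a, covV pd Γ Z i a * Ω a j) + ∑ a, Ω i a * covV pd Γ Z j a) * hhalf
  refine ⟨part1, ?_⟩
  intro hg0 hΩ0
  constructor
  · intro hS i j
    have H := part1 i j
    have hz1 : (∑ a, ∑ b, LZg i a * ginv a b * Ω b j) = 0 := by simp [hg0]
    have hz2 : (∑ a, ∑ b, Ω i a * ginv a b * LZg b j) = 0 := by simp [hg0]
    have hx : algebraMap ℝ R (1/2) *
        ((∑ a, ∑ b, dZ i a * ginv a b * Ω b j) - ∑ a, ∑ b, Ω i a * ginv a b * dZ b j) = 0 := by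
      linear_combination (hΩ0 i j) - H - (hS i j)
        - (algebraMap ℝ R (1/2)) * hz1 - (algebraMap ℝ R (1/2)) * hz2
    linear_combination 2 * hx
      - ((∑ a, ∑ b, dZ i a * ginv a b * Ω b j) - ∑ a, ∑ b, Ω i a * ginv a b * dZ b j) * hhalf
  · intro hAB i j
    have H := part1 i j
    have hz1 : (∑ a, ∑ b, LZg i a * ginv a b * Ω b j) = 0 := by simp [hg0]
    have hz2 : (∑ a, ∑ b, Ω i a * ginv a b * LZg b j) = 0 := by simp [hg0]
    linear_combination -H + (hΩ0 i j) - (algebraMap ℝ R (1/2)) * (hAB i j)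
      - (algebraMap ℝ R (1/2)) * hz1 - (algebraMap ℝ R (1/2)) * hz2
end
end
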